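/- arXiv:1910.02644 — 11 statements merged into one kernel-verified Lean document; each statement's English description precedes it below -/
import Mathlib

section
/- Let S = ⟨A ∣ u → v⟩ be a one-rule SRS such that u ≠ v and A has at least two letters. Then M_2 is embeddable in the reduction graph G_S. -/
/-- One-step reduction of the one-rule SRS `⟨A ∣ u → v⟩`: `w →_S w'`. -/
def Step {A : Type*} (u v w w' : List A) : Prop :=
  ∃ p q : List A, w = p ++ u ++ q ∧ w' = p ++ v ++ q

/-- One-step reduction of `⟨A ∣ u → v⟩` carried out at position `i`. -/
def StepAt {A : Type*} (u v : List A) (i : ℕ) (w w' : List A) : Prop :=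
  ∃ p q : List A, p.length = i ∧ w = p ++ u ++ q ∧ w' = p ++ v ++ q

/-- The diamond graph `M_k` is embeddable in the reduction graph `G_S` of
`S = ⟨A ∣ u → v⟩`: there are pairwise distinct words `x, y, z_1, …, z_k`
with `x →_S z_i` and `z_i →_S y` for every `i`. -/
def MkEmbeddable {A : Type*} (u v : List A) (k : ℕ) : Prop :=
  ∃ (x y : List A) (z : Fin k → List A),
    Function.Injective z ∧ (∀ i, x ≠ z i) ∧ (∀ i, y ≠ z i) ∧ x ≠ y ∧
    ∀ i, Step u v x (z i) ∧ Step u v (z i) y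

/-- Projection from the decorated alphabet `A ⊕ A` (`inl a` = plain letter `a`,
`inr a` = decorated letter `a•`) back to `A`. -/
def proj {A : Type*} : A ⊕ A → A := Sum.elim id id

/-- One-step reduction of the decorated SRS `S̄` carried out at position `i`:
some word `ū` projecting to `u` is replaced by the fully decorated `v•`. -/
def DecStepAt {A : Type*} (u v : List A) (i : ℕ) (w w' : List (A ⊕ A)) : Prop :=
  ∃ p q ubar : List (A ⊕ A),
    p.length = i ∧ ubar.map proj = u ∧
    w = p ++ ubar ++ q ∧ w' = p ++ v.map Sum.inr ++ q

/-- The leftmost decorated letter of `w` is at position `i`. -/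
def FirstDecorated {A : Type*} (w : List (A ⊕ A)) (i : ℕ) : Prop :=
  (∃ a : A, w[i]? = some (Sum.inr a)) ∧
  ∀ j < i, ∀ a : A, w[j]? ≠ some (Sum.inr a)

/-- The one-rule SRS `⟨A ∣ u → v⟩` is left cancellative:
`u, v` are nonempty and their first letters are distinct. -/
def LeftCancellative {A : Type*} (u v : List A) : Prop :=
  u ≠ [] ∧ v ≠ [] ∧ u.head? ≠ v.head?

/-- `w` is bordered with `T`: `T` is both a prefix and a suffix of `w`. -/
def Bordered {A : Type*} (T w : List A) : Prop :=
  T <+: w ∧ T <:+ w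

/-- `T` is self-overlap-free: `OVL(T) = ∅`, i.e. there is no nonempty `w`
with `T = x ++ w = w ++ y` for nonempty `x, y`. -/
def SelfOverlapFree {A : Type*} (T : List A) : Prop :=
  ∀ w x y : List A, w ≠ [] → x ≠ [] → y ≠ [] → T = x ++ w → T = w ++ y → False

/-- `glue T [R₁, …, R_k] = T R₁ T R₂ ⋯ T R_k T`, the word of `Bord_T` whose
canonical decomposition is `R₁, …, R_k`; thus `φ_T (glue T Rs) = Rs`
(a word of length `Rs.length` over the alphabet `B` of `T`-free words). -/
def glue {A : Type*} (T : List A) : List (List A) → List A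
  | [] => T
  | R :: Rs => T ++ R ++ glue T Rs

/-
Choose a letter `c` with `v c u ≠ u c v`; then `u c u` rewrites to `v c v` through the two
distinct intermediate words `v c u` and `u c v`. Such a `c` exists: when `|u| = |v|` any letter
works because `u ≠ v`, and otherwise `v c u = u c v` forces `c` to be the letter at position
`min |u| |v|` of the longer word, so `a` or `b` works.
-/

section

variable {A : Type*}

lemma mkEmbeddable_two_of_diamond {u v x y z₁ z₂ : List A} (hz : z₁ ≠ z₂)
    (hxz₁ : x ≠ z₁) (hxz₂ : x ≠ z₂) (hyz₁ : y ≠ z₁) (hyz₂ : y ≠ z₂) (hxy : x ≠ y)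
    (h₁ : Step u v x z₁ ∧ Step u v z₁ y) (h₂ : Step u v x z₂ ∧ Step u v z₂ y) :
    MkEmbeddable u v 2 := by
  refine ⟨x, y, ![z₁, z₂], ?_, ?_, ?_, hxy, ?_⟩
  · intro i j hij
    fin_cases i <;> fin_cases j <;> simp_all [eq_comm]
  all_goals intro i; fin_cases i <;> assumption

lemma eq_getElem_of_append_cons_eq {u v : List A} {c : A} (h : u.length < v.length)
    (hc : v ++ c :: u = u ++ c :: v) : c = v[u.length] := by
  have := congrArg (·[u.length]?) hc
  simp only [List.getElem?_append_left h, List.getElem?_append_right le_rfl, Nat.sub_self,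
    List.getElem?_cons_zero, List.getElem?_eq_getElem h, Option.some.injEq] at this
  exact this.symm

lemma eq_of_append_cons_self_eq {u v : List A} {c : A} (h : u ++ c :: u = v ++ c :: v) :
    u = v := by
  have hlen : u.length = v.length := by
    have := congrArg List.length h
    simp only [List.length_append, List.length_cons] at this
    omega
  exact (List.append_inj h hlen).1

lemma exists_append_cons_ne {u v : List A} (huv : u ≠ v) {a b : A} (hab : a ≠ b) :
    ∃ c, v ++ c :: u ≠ u ++ c :: v := by
  by_contra! h
  rcases lt_trichotomy u.length v.length with hlt | heq | hgt
  · exact hab ((eq_getElem_of_append_cons_eq hlt (h a)).trans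
      (eq_getElem_of_append_cons_eq hlt (h b)).symm)
  · exact huv (List.append_inj (h a) heq.symm).1.symm
  · exact hab ((eq_getElem_of_append_cons_eq hgt (h a).symm).trans
      (eq_getElem_of_append_cons_eq hgt (h b).symm).symm)

end

/-- if `u ≠ v` and the alphabet has at least two letters,
then `M_2` is embeddable in `G_S`. -/
theorem M2_embeddable {A : Type*} (u v : List A) (huv : u ≠ v)
    (a b : A) (hab : a ≠ b) :
    MkEmbeddable u v 2 := by
  obtain ⟨c, hc⟩ := exists_append_cons_ne huv hab
  refine mkEmbeddable_two_of_diamond (x := u ++ c :: u) (y := v ++ c :: v)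
    hc (by simpa using huv) (by simpa using huv) (by simpa using huv.symm)
    (by simpa using huv.symm) (fun h => huv (eq_of_append_cons_self_eq h)) ?_ ?_
  · exact ⟨⟨[], c :: u, by simp, by simp⟩, ⟨v ++ [c], [], by simp, by simp⟩⟩
  · exact ⟨⟨u ++ [c], [], by simp, by simp⟩, ⟨[], c :: v, by simp, by simp⟩⟩
end

section
/- Let S = ⟨A ∣ u → v⟩ be a one-rule SRS, let x_1 →_S x_2 →_S ⋯ →_S x_n be a reduction with steps carried out at positions p_1, …, p_{n−1}, and let x̄_1 → x̄_2 → ⋯ → x̄_n be its lift to the decorated SRS S̄. If x̄_n contains a decorated letter and the leftmost decorated letter of x̄_n is at position i, then: (1) no step of the reduction is carried out at a position j with j < i, and (2) some step of the reduction is carried out at position i. -/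
/-! A step at position `p` leaves the letters at positions `< p` untouched and, when `v ≠ []`,
writes a decorated letter at `p`. By induction along the reduction, every decorated letter of
`x̄_n` therefore lies at or to the right of some step position (`x̄_1` is undecorated), and to the
left of or at every step position lies a decorated letter of `x̄_n`. So the leftmost decorated
letter sits exactly at the smallest step position. When `v = []` no decorated letter is ever
created. -/

section Decoration

variable {A : Type*}

def IsDecoratedAt (w : List (A ⊕ A)) (j : ℕ) : Prop :=
  ∃ a : A, w[j]? = some (Sum.inr a)

theorem not_isDecoratedAt_map_inl (l : List A) (j : ℕ) :
    ¬ IsDecoratedAt (l.map Sum.inl) j := by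
  rintro ⟨a, ha⟩
  cases h : l[j]? <;> simp_all

theorem exists_isDecoratedAt_iff {w : List (A ⊕ A)} :
    (∃ j, IsDecoratedAt w j) ↔ ∃ a, Sum.inr a ∈ w := by
  simp only [IsDecoratedAt, List.mem_iff_getElem?]
  exact exists_comm

theorem firstDecorated_iff {w : List (A ⊕ A)} {i : ℕ} :
    FirstDecorated w i ↔ IsDecoratedAt w i ∧ ∀ j < i, ¬ IsDecoratedAt w j := by
  simp [FirstDecorated, IsDecoratedAt]

end Decoration

namespace DecStepAt

variable {A : Type*} {u v : List A} {p : ℕ} {w w' : List (A ⊕ A)}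

theorem getElem?_eq_of_lt (h : DecStepAt u v p w w') {j : ℕ} (hj : j < p) :
    w'[j]? = w[j]? := by
  obtain ⟨P, Q, ub, rfl, -, rfl, rfl⟩ := h
  simp only [List.append_assoc, List.getElem?_append_left hj]

theorem isDecoratedAt_iff_of_lt (h : DecStepAt u v p w w') {j : ℕ} (hj : j < p) :
    IsDecoratedAt w' j ↔ IsDecoratedAt w j := by
  simp only [IsDecoratedAt, h.getElem?_eq_of_lt hj]

theorem isDecoratedAt (h : DecStepAt u v p w w') (hv : v ≠ []) : IsDecoratedAt w' p := by
  obtain ⟨P, Q, ub, rfl, -, -, rfl⟩ := h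
  obtain ⟨b, v, rfl⟩ := List.exists_cons_of_ne_nil hv
  exact ⟨b, by simp⟩

theorem exists_isDecoratedAt_of_nil (h : DecStepAt u [] p w w')
    (h' : ∃ j, IsDecoratedAt w' j) : ∃ j, IsDecoratedAt w j := by
  obtain ⟨P, Q, ub, -, -, rfl, rfl⟩ := h
  rw [exists_isDecoratedAt_iff] at h' ⊢
  obtain ⟨a, ha⟩ := h'
  simp only [List.map_nil, List.append_nil, List.mem_append] at ha
  exact ⟨a, by simp only [List.mem_append]; tauto⟩

end DecStepAt

section Reduction

variable {A : Type*} {u v : List A} {n : ℕ}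

def IsDecoratedReduction (u v : List A) (xbar : Fin (n + 1) → List (A ⊕ A))
    (pos : Fin n → ℕ) : Prop :=
  ∀ k : Fin n, DecStepAt u v (pos k) (xbar k.castSucc) (xbar k.succ)

namespace IsDecoratedReduction

theorem init {xbar : Fin (n + 2) → List (A ⊕ A)} {pos : Fin (n + 1) → ℕ}
    (h : IsDecoratedReduction u v xbar pos) :
    IsDecoratedReduction u v (Fin.init xbar) (Fin.init pos) := fun k => by
  simpa only [Fin.init, Fin.succ_castSucc] using h k.castSucc

theorem last_step {xbar : Fin (n + 2) → List (A ⊕ A)} {pos : Fin (n + 1) → ℕ}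
    (h : IsDecoratedReduction u v xbar pos) :
    DecStepAt u v (pos (Fin.last n)) (Fin.init xbar (Fin.last n)) (xbar (Fin.last (n + 1))) := by
  simpa only [Fin.init, Fin.succ_last] using h (Fin.last n)

variable {xbar : Fin (n + 1) → List (A ⊕ A)} {pos : Fin n → ℕ}

theorem not_exists_isDecoratedAt_of_nil (h : IsDecoratedReduction u [] xbar pos)
    (h₀ : ∀ j, ¬ IsDecoratedAt (xbar 0) j) :
    ¬ ∃ j, IsDecoratedAt (xbar (Fin.last n)) j := by
  induction n with
  | zero => simpa using h₀
  | succ n ih => exact fun hdec => ih h.init h₀ (h.last_step.exists_isDecoratedAt_of_nil hdec)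

theorem exists_pos_le_of_isDecoratedAt (h : IsDecoratedReduction u v xbar pos)
    (h₀ : ∀ j, ¬ IsDecoratedAt (xbar 0) j) {j : ℕ}
    (hj : IsDecoratedAt (xbar (Fin.last n)) j) : ∃ k, pos k ≤ j := by
  induction n with
  | zero => exact absurd hj (h₀ j)
  | succ n ih =>
    by_cases hlt : j < pos (Fin.last n)
    · obtain ⟨k, hk⟩ := ih h.init h₀ ((h.last_step.isDecoratedAt_iff_of_lt hlt).1 hj)
      exact ⟨k.castSucc, hk⟩
    · exact ⟨Fin.last n, not_lt.1 hlt⟩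

theorem exists_isDecoratedAt_le_pos (h : IsDecoratedReduction u v xbar pos) (hv : v ≠ [])
    (k : Fin n) : ∃ j ≤ pos k, IsDecoratedAt (xbar (Fin.last n)) j := by
  induction n with
  | zero => exact k.elim0
  | succ n ih =>
    have hlast := h.last_step
    induction k using Fin.lastCases with
    | last => exact ⟨_, le_rfl, hlast.isDecoratedAt hv⟩
    | cast k =>
      obtain ⟨j, hjk, hj⟩ := ih h.init k
      by_cases hlt : j < pos (Fin.last n)
      · exact ⟨j, hjk, (hlast.isDecoratedAt_iff_of_lt hlt).2 hj⟩
      · exact ⟨_, (not_lt.1 hlt).trans hjk, hlast.isDecoratedAt hv⟩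

end IsDecoratedReduction

end Reduction

theorem first_decorated_position_general {A : Type*} (u v : List A) (n : ℕ)
    (x : Fin (n + 1) → List A) (xbar : Fin (n + 1) → List (A ⊕ A))
    (pos : Fin n → ℕ)
    (hstart : xbar 0 = (x 0).map Sum.inl)
    (hdstep : ∀ j : Fin n, DecStepAt u v (pos j) (xbar j.castSucc) (xbar j.succ))
    (i : ℕ) (hi : FirstDecorated (xbar (Fin.last n)) i) :
    (∀ j : Fin n, ¬ pos j < i) ∧ (∃ j : Fin n, pos j = i) := by
  have hred : IsDecoratedReduction u v xbar pos := hdstep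
  have h₀ : ∀ j, ¬ IsDecoratedAt (xbar 0) j := hstart ▸ not_isDecoratedAt_map_inl (x 0)
  obtain ⟨hdec, hmin⟩ := firstDecorated_iff.1 hi
  have hv : v ≠ [] := by
    rintro rfl
    exact hred.not_exists_isDecoratedAt_of_nil h₀ ⟨i, hdec⟩
  have hle : ∀ k, i ≤ pos k := fun k => by
    obtain ⟨j, hjk, hj⟩ := hred.exists_isDecoratedAt_le_pos hv k
    exact (not_lt.1 fun hji => hmin j hji hj).trans hjk
  obtain ⟨k, hk⟩ := hred.exists_pos_le_of_isDecoratedAt h₀ hdec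
  exact ⟨fun k => not_lt.2 (hle k), k, le_antisymm hk (hle k)⟩

/-- if the leftmost decorated letter of the lift `x̄_n` is at
position `i`, then (1) no step of the reduction is carried out at a position
`j < i`, and (2) some step of the reduction is carried out at position `i`. -/
theorem first_decorated_position {A : Type*} (u v : List A) (n : ℕ)
    (x : Fin (n + 1) → List A) (xbar : Fin (n + 1) → List (A ⊕ A))
    (pos : Fin n → ℕ)
    (hstart : xbar 0 = (x 0).map Sum.inl)
    (hproj : ∀ j, (xbar j).map proj = x j)
    (hstep : ∀ j : Fin n, StepAt u v (pos j) (x j.castSucc) (x j.succ))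
    (hdstep : ∀ j : Fin n, DecStepAt u v (pos j) (xbar j.castSucc) (xbar j.succ))
    (i : ℕ) (hi : FirstDecorated (xbar (Fin.last n)) i) :
    (∀ j : Fin n, ¬ pos j < i) ∧ (∃ j : Fin n, pos j = i) :=
  first_decorated_position_general u v n x xbar pos hstart hdstep i hi
end

section
/- Let S = ⟨A ∣ u → v⟩ be a left cancellative one-rule SRS, let x_1 →_S x_2 →_S ⋯ →_S x_n be a reduction, and let x̄_1 → x̄_2 → ⋯ → x̄_n be its lift to the decorated SRS S̄. If x̄_n contains a decorated letter and the leftmost decorated letter of x̄_n is at position i, then the letter at position i of x_1 is the first letter of u and the letter at position i of x_n is the first letter of v. -/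
/-! A step of the decorated system at position `k` leaves the letters before `k` untouched and puts
`(head v)•` at `k`. Hence, as long as no decorated letter precedes position `i`, the letter at `i`
of the lift is either the letter at `i` of `x₁`, still undecorated, or `(head v)•` with `head u`
at `i` in `x₁`. The second alternative is propagated through a step at `i` because its redex
starts at `i` with a letter projecting to `head u`, which under the first alternative is the
letter of `x₁`. -/

open Relation

theorem reflTransGen_of_fin_chain {α : Type*} {r : α → α → Prop} :
    ∀ {n : ℕ} (f : Fin (n + 1) → α), (∀ j : Fin n, r (f j.castSucc) (f j.succ)) →
      ReflTransGen r (f 0) (f (Fin.last n))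
  | 0, _, _ => .refl
  | _ + 1, f, h =>
    (reflTransGen_of_fin_chain (fun j ↦ f j.castSucc) fun j ↦ h j.castSucc).tail (h (Fin.last _))

section Decorated

variable {A : Type*} {u v : List A}

def DecStep (u v : List A) (w w' : List (A ⊕ A)) : Prop :=
  ∃ k, DecStepAt u v k w w'

namespace DecStepAt

variable {k : ℕ} {w w' : List (A ⊕ A)}

theorem getElem?_of_lt (h : DecStepAt u v k w w') {j : ℕ} (hj : j < k) : w'[j]? = w[j]? := by
  obtain ⟨p, q, ubar, rfl, -, rfl, rfl⟩ := h
  simp only [List.append_assoc, List.getElem?_append_left hj]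

theorem getElem?_self (h : DecStepAt u v k w w') (hv : v ≠ []) :
    w'[k]? = v.head?.map Sum.inr := by
  obtain ⟨p, q, ubar, rfl, -, -, rfl⟩ := h
  obtain ⟨c, v, rfl⟩ := List.exists_cons_of_ne_nil hv
  simp [List.append_assoc]

theorem map_proj_getElem?_self (h : DecStepAt u v k w w') (hu : u ≠ []) :
    w[k]?.map proj = u.head? := by
  obtain ⟨p, q, ubar, rfl, rfl, rfl, -⟩ := h
  cases ubar with
  | nil => exact absurd rfl hu
  | cons b ubar => simp [List.append_assoc]

end DecStepAt

theorem getElem?_of_reflTransGen_decStep (hu : u ≠ []) (hv : v ≠ []) {y : List A}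
    {w : List (A ⊕ A)} (h : ReflTransGen (DecStep u v) (y.map Sum.inl) w) {i : ℕ}
    (hpre : ∀ j < i, ∀ a : A, w[j]? ≠ some (Sum.inr a)) :
    w[i]? = y[i]?.map Sum.inl ∨ (w[i]? = v.head?.map Sum.inr ∧ y[i]? = u.head?) := by
  induction h with
  | refl => exact .inl (List.getElem?_map ..)
  | @tail w w' _ hstep ih =>
    obtain ⟨k, hk⟩ := hstep
    have hpre_of_le (hik : i ≤ k) : ∀ j < i, ∀ a : A, w[j]? ≠ some (Sum.inr a) :=
      fun j hj a ↦ hk.getElem?_of_lt (hj.trans_le hik) ▸ hpre j hj a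
    rcases lt_trichotomy i k with hik | rfl | hki
    · rw [hk.getElem?_of_lt hik]
      exact ih (hpre_of_le hik.le)
    · refine .inr ⟨hk.getElem?_self hv, ?_⟩
      rcases ih (hpre_of_le le_rfl) with hplain | ⟨-, hy⟩
      · simpa [hplain, Option.map_map, proj] using hk.map_proj_getElem?_self hu
      · exact hy
    · obtain ⟨c, hc⟩ := Option.ne_none_iff_exists'.mp (List.head?_eq_none_iff.not.mpr hv)
      exact (hpre k hki c (by rw [hk.getElem?_self hv, hc]; rfl)).elim

end Decorated

theorem first_decorated_letters_general {A : Type*} (u v : List A)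
    (hlc : LeftCancellative u v) (n : ℕ)
    (x : Fin (n + 1) → List A) (xbar : Fin (n + 1) → List (A ⊕ A))
    (pos : Fin n → ℕ)
    (hstart : xbar 0 = (x 0).map Sum.inl)
    (hproj : ∀ j, (xbar j).map proj = x j)
    (hdstep : ∀ j : Fin n, DecStepAt u v (pos j) (xbar j.castSucc) (xbar j.succ))
    (i : ℕ) (hi : FirstDecorated (xbar (Fin.last n)) i) :
    (x 0)[i]? = u.head? ∧ (x (Fin.last n))[i]? = v.head? := by
  obtain ⟨hu, hv, -⟩ := hlc
  obtain ⟨⟨a, ha⟩, hpre⟩ := hi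
  have hred : ReflTransGen (DecStep u v) ((x 0).map Sum.inl) (xbar (Fin.last n)) :=
    hstart ▸ reflTransGen_of_fin_chain xbar fun j ↦ ⟨pos j, hdstep j⟩
  rcases getElem?_of_reflTransGen_decStep hu hv hred hpre with hplain | ⟨hdec, hfirst⟩
  · simp [ha] at hplain
  · refine ⟨hfirst, ?_⟩
    rw [← hproj, List.getElem?_map, hdec, Option.map_map]
    exact Option.map_id'

/-- if `S` is left cancellative and the leftmost decorated letter
of the lift `x̄_n` is at position `i`, then the letter at position `i` of `x_1`
is the first letter of `u` and the letter at position `i` of `x_n` is the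
first letter of `v`. -/
theorem first_decorated_letters {A : Type*} (u v : List A)
    (hlc : LeftCancellative u v) (n : ℕ)
    (x : Fin (n + 1) → List A) (xbar : Fin (n + 1) → List (A ⊕ A))
    (pos : Fin n → ℕ)
    (hstart : xbar 0 = (x 0).map Sum.inl)
    (hproj : ∀ j, (xbar j).map proj = x j)
    (hstep : ∀ j : Fin n, StepAt u v (pos j) (x j.castSucc) (x j.succ))
    (hdstep : ∀ j : Fin n, DecStepAt u v (pos j) (xbar j.castSucc) (xbar j.succ))
    (i : ℕ) (hi : FirstDecorated (xbar (Fin.last n)) i) :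
    (x 0)[i]? = u.head? ∧ (x (Fin.last n))[i]? = v.head? :=
  first_decorated_letters_general u v hlc n x xbar pos hstart hproj hdstep i hi
end

section
/- Let S = ⟨A ∣ u → v⟩ be a left cancellative one-rule SRS. Then M_3 is not embeddable in the reduction graph G_S; that is, there do not exist pairwise distinct words x, y, z_1, z_2, z_3 ∈ A* with x →_S z_i and z_i →_S y for i = 1, 2, 3. -/
section

variable {A : Type*} {u v : List A}

namespace StepAt

theorem symm {i : ℕ} {w w' : List A} (h : StepAt u v i w w') : StepAt v u i w' w := by
  obtain ⟨p, q, hp, rfl, rfl⟩ := h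
  exact ⟨p, q, hp, rfl, rfl⟩

theorem getElem?_eq_of_lt {i k : ℕ} {w w' : List A} (h : StepAt u v i w w') (hk : k < i) :
    w[k]? = w'[k]? := by
  obtain ⟨p, q, rfl, rfl, rfl⟩ := h
  simp only [List.append_assoc, List.getElem?_append_left hk]

theorem getElem?_source {i : ℕ} {w w' : List A} (h : StepAt u v i w w') (hu : u ≠ []) :
    w[i]? = u.head? := by
  obtain ⟨p, q, rfl, rfl, rfl⟩ := h
  rw [List.append_assoc, List.getElem?_append_right le_rfl, Nat.sub_self,
    List.getElem?_append_left (List.length_pos_iff.mpr hu), List.head?_eq_getElem?]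

theorem getElem?_target {i : ℕ} {w w' : List A} (h : StepAt u v i w w') (hv : v ≠ []) :
    w'[i]? = v.head? :=
  h.symm.getElem?_source hv

theorem right_unique {i : ℕ} {w w₁ w₂ : List A} (h₁ : StepAt u v i w w₁)
    (h₂ : StepAt u v i w w₂) : w₁ = w₂ := by
  obtain ⟨p₁, q₁, hp₁, rfl, rfl⟩ := h₁
  obtain ⟨p₂, q₂, hp₂, hw, rfl⟩ := h₂
  simp only [List.append_assoc] at hw
  obtain ⟨rfl, hq⟩ := List.append_inj hw (hp₁.trans hp₂.symm)
  rw [List.append_cancel_left hq]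

theorem left_unique {i : ℕ} {w₁ w₂ w : List A} (h₁ : StepAt u v i w₁ w)
    (h₂ : StepAt u v i w₂ w) : w₁ = w₂ :=
  h₁.symm.right_unique h₂.symm

end StepAt

theorem Step.exists_stepAt {w w' : List A} (h : Step u v w w') : ∃ i, StepAt u v i w w' := by
  obtain ⟨p, q, hw, hw'⟩ := h
  exact ⟨p.length, p, q, rfl, hw, hw'⟩

def IsFirstMismatch (x y : List A) (m : ℕ) : Prop :=
  (∀ k < m, x[k]? = y[k]?) ∧ x[m]? ≠ y[m]?

theorem IsFirstMismatch.unique {x y : List A} {m n : ℕ} (hm : IsFirstMismatch x y m)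
    (hn : IsFirstMismatch x y n) : m = n := by
  by_contra hne
  rcases Nat.lt_or_gt_of_ne hne with h | h
  · exact hm.2 (hn.1 m h)
  · exact hn.2 (hm.1 n h)

/-- `z` carries `v₀` at position `i` and `u₀` at position `j`, so `i ≠ j`; at the smaller of the two,
`x` carries `u₀` and `y` carries `v₀`. -/
theorem StepAt.isFirstMismatch_min (hlc : LeftCancellative u v) {i j : ℕ} {x z y : List A}
    (h₁ : StepAt u v i x z) (h₂ : StepAt u v j z y) : IsFirstMismatch x y (min i j) := by
  obtain ⟨hu, hv, hne⟩ := hlc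
  refine ⟨fun k hk => ?_, ?_⟩
  · rw [h₁.getElem?_eq_of_lt (lt_of_lt_of_le hk (min_le_left i j)),
      h₂.getElem?_eq_of_lt (lt_of_lt_of_le hk (min_le_right i j))]
  · have hij : i ≠ j := by
      rintro rfl
      exact hne ((h₂.getElem?_source hu).symm.trans (h₁.getElem?_target hv))
    rcases Nat.lt_or_gt_of_ne hij with h | h
    · rw [min_eq_left h.le, h₁.getElem?_source hu, ← h₂.getElem?_eq_of_lt h,
        h₁.getElem?_target hv]
      exact hne
    · rw [min_eq_right h.le, h₁.getElem?_eq_of_lt h, h₂.getElem?_source hu,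
        h₂.getElem?_target hv]
      exact hne

/-- Every middle vertex `z r` of a diamond from `x` to `y` is reached by a step at the first
mismatch `m` of `x` and `y`, or leaves by one; a step at a fixed position is determined by either
endpoint, so each alternative holds for at most one `r`. -/
theorem card_le_two_of_diamond {ι : Type*} [Fintype ι] (hlc : LeftCancellative u v) {x y : List A}
    {z : ι → List A} (hz : Function.Injective z)
    (hxzy : ∀ r, Step u v x (z r) ∧ Step u v (z r) y) : Fintype.card ι ≤ 2 := by
  classical
  choose i hi using fun r => (hxzy r).1.exists_stepAt
  choose j hj using fun r => (hxzy r).2.exists_stepAt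
  have hmin : ∀ r s, min (i r) (j r) = min (i s) (j s) := fun r s =>
    ((hi r).isFirstMismatch_min hlc (hj r)).unique ((hi s).isFirstMismatch_min hlc (hj s))
  have hfwd : (Finset.univ.filter fun r => i r ≤ j r).card ≤ 1 := by
    refine Finset.card_le_one.mpr fun r hr s hs => hz ((hi r).right_unique ?_)
    have hrs := hmin r s
    rw [min_eq_left (Finset.mem_filter.mp hr).2, min_eq_left (Finset.mem_filter.mp hs).2] at hrs
    exact hrs ▸ hi s
  have hbwd : (Finset.univ.filter fun r => ¬ i r ≤ j r).card ≤ 1 := by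
    refine Finset.card_le_one.mpr fun r hr s hs => hz ((hj r).left_unique ?_)
    have hrs := hmin r s
    rw [min_eq_right (not_le.mp (Finset.mem_filter.mp hr).2).le,
      min_eq_right (not_le.mp (Finset.mem_filter.mp hs).2).le] at hrs
    exact hrs ▸ hj s
  have hsplit := Finset.card_filter_add_card_filter_not (s := Finset.univ) fun r => i r ≤ j r
  rw [Finset.card_univ] at hsplit
  omega

end

/-- if `S = ⟨A ∣ u → v⟩` is left cancellative then `M_3` is not
embeddable in `G_S`. -/
theorem M3_not_embeddable_of_leftCancellative {A : Type*} (u v : List A)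
    (hlc : LeftCancellative u v) :
    ¬ MkEmbeddable u v 3 := by
  rintro ⟨x, y, z, hz, -, -, -, hxzy⟩
  simpa using card_le_two_of_diamond hlc hz hxzy
end

section
/- Let S = ⟨A ∣ u → v⟩ be a one-rule SRS such that |u| ≤ |v| and v is not bordered with u (i.e., u is not a prefix of v or u is not a suffix of v). Then M_3 is not embeddable in the reduction graph G_S. -/
namespace M3Aux

variable {A : Type*}

/-- If `u` is not a prefix of `v`, there is an exact first mismatch. -/
lemma exists_mismatch {u v : List A} (h : ¬ u <+: v) :
    ∃ c, u.take c = v.take c ∧ u[c]? ≠ v[c]? := by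
  induction u generalizing v with
  | nil => exact absurd List.nil_prefix h
  | cons a u ih =>
    cases v with
    | nil => exact ⟨0, rfl, by simp⟩
    | cons b v =>
      by_cases hab : a = b
      · subst hab
        have h' : ¬ u <+: v := fun hp => h (by simpa [List.cons_prefix_cons] using hp)
        obtain ⟨c, h1, h2⟩ := ih h'
        exact ⟨c + 1, by simp [h1], by simpa using h2⟩
      · exact ⟨0, rfl, by simp [hab]⟩

/-- Exact mismatch position for a single rewrite step. -/
lemma step_mismatch {u v : List A} {c : ℕ} (hck : c < u.length) (hcm : c < v.length)
    (htake : u.take c = v.take c) (hget : u[c]? ≠ v[c]?)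
    {P S w w' : List A} (hw : w = P ++ u ++ S) (hw' : w' = P ++ v ++ S) :
    w.take (P.length + c) = w'.take (P.length + c) ∧
      w[P.length + c]? ≠ w'[P.length + c]? := by
  subst hw hw'
  have tke : ∀ (t : List A), c ≤ t.length →
      (P ++ t ++ S).take (P.length + c) = P ++ t.take c := by
    intro t ht
    rw [List.append_assoc, List.take_length_add_append, List.take_append,
      Nat.sub_eq_zero_of_le ht, List.take_zero, List.append_nil]
  have gte : ∀ (t : List A), c < t.length →
      (P ++ t ++ S)[P.length + c]? = t[c]? := by
    intro t ht
    rw [List.append_assoc, List.getElem?_append_right (Nat.le_add_right _ _),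
      Nat.add_sub_cancel_left, List.getElem?_append, if_pos ht]
  constructor
  · rw [tke u hck.le, tke v hcm.le, htake]
  · rw [gte u hck, gte v hcm]; exact hget

/-- Ultrametric composition of two exact mismatches. -/
lemma um {α β γ : List A} {i j : ℕ} (hij : i ≠ j)
    (h1 : α.take i = β.take i) (h2 : α[i]? ≠ β[i]?)
    (h3 : β.take j = γ.take j) (h4 : β[j]? ≠ γ[j]?) :
    α.take (min i j) = γ.take (min i j) ∧ α[min i j]? ≠ γ[min i j]? := by
  rcases lt_or_gt_of_ne hij with h | h
  · rw [min_eq_left h.le]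
    have ht : β.take i = γ.take i := by
      have := congrArg (List.take i) h3
      rwa [List.take_take, List.take_take, min_eq_left h.le] at this
    have hg : β[i]? = γ[i]? := by
      have := congrArg (fun l => l[i]?) h3
      simpa [List.getElem?_take, h] using this
    exact ⟨h1.trans ht, fun hc => h2 (hc.trans hg.symm)⟩
  · rw [min_eq_right h.le]
    have ht : α.take j = β.take j := by
      have := congrArg (List.take j) h1
      rwa [List.take_take, List.take_take, min_eq_left h.le] at this
    have hg : α[j]? = β[j]? := by
      have := congrArg (fun l => l[j]?) h1
      simpa [List.getElem?_take, h] using this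
    exact ⟨ht.trans h3, fun hc => h4 (hg.symm.trans hc)⟩

/-- The exact mismatch position between two words is unique. -/
lemma mismatch_unique {x y : List A} {i j : ℕ}
    (h1 : x.take i = y.take i) (h2 : x[i]? ≠ y[i]?)
    (h3 : x.take j = y.take j) (h4 : x[j]? ≠ y[j]?) : i = j := by
  by_contra hne
  rcases lt_or_gt_of_ne hne with h | h
  · apply h2
    have := congrArg (fun l => l[i]?) h3
    simpa [List.getElem?_take, h] using this
  · apply h4
    have := congrArg (fun l => l[j]?) h1
    simpa [List.getElem?_take, h] using this

/-- Core case: `u` is not a prefix of `v`. -/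
theorem core (u v : List A) (hlen : u.length ≤ v.length) (hp : ¬ u <+: v) :
    ¬ MkEmbeddable u v 3 := by
  rintro ⟨x, y, z, hinj, _hxz, _hyz, _hxy, hstep⟩
  obtain ⟨c, hctake, hcget⟩ := exists_mismatch hp
  have hck : c < u.length := by
    by_contra hk
    push_neg at hk
    apply hp
    have h2 : u = v.take c := (List.take_of_length_le hk) ▸ hctake
    rw [h2]
    exact List.take_prefix _ _
  have hcm : c < v.length := hck.trans_le hlen
  -- For each i, extract positions and the key facts.
  have key : ∀ i : Fin 3, ∃ p q : ℕ,
      (x.take (min p q + c) = y.take (min p q + c) ∧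
        x[min p q + c]? ≠ y[min p q + c]?) ∧
      z i = x.take p ++ v ++ x.drop (p + u.length) ∧
      z i = y.take q ++ u ++ y.drop (q + v.length) := by
    intro i
    obtain ⟨⟨P, S, hx, hz⟩, ⟨Q, T, hz', hy⟩⟩ := hstep i
    refine ⟨P.length, Q.length, ?_, ?_, ?_⟩
    · -- mismatch of x and y at min + c
      have hpq : P.length ≠ Q.length := by
        intro hh
        apply hp
        rw [List.append_assoc] at hz hz'
        have h2 := (List.append_inj (hz.symm.trans hz') hh).2
        -- v ++ S = u ++ T, with |u| ≤ |v|
        have hu : u = (v ++ S).take u.length := by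
          rw [h2, List.take_append, Nat.sub_eq_zero_of_le le_rfl,
            List.take_zero, List.append_nil, List.take_of_length_le le_rfl]
        rw [List.take_append, Nat.sub_eq_zero_of_le hlen,
          List.take_zero, List.append_nil] at hu
        rw [hu]
        exact List.take_prefix _ _
      have m1 := step_mismatch hck hcm hctake hcget hx hz
      have m2 := step_mismatch hck hcm hctake hcget hz' hy
      have hne : P.length + c ≠ Q.length + c := by omega
      have := um hne m1.1 m1.2 m2.1 m2.2
      have hmin : min (P.length + c) (Q.length + c) = min P.length Q.length + c := by
        omega
      rwa [hmin] at this
    · -- z i in terms of x and p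
      have hP : x.take P.length = P := by
        rw [hx, List.append_assoc, List.take_left]
      have hS : x.drop (P.length + u.length) = S := by
        rw [hx, ← List.length_append, List.drop_left]
      rw [hP, hS]; exact hz
    · have hQ : y.take Q.length = Q := by
        rw [hy, List.append_assoc, List.take_left]
      have hT : y.drop (Q.length + v.length) = T := by
        rw [hy, ← List.length_append, List.drop_left]
      rw [hQ, hT]; exact hz'
  obtain ⟨p0, q0, hm0, hzx0, hzy0⟩ := key 0
  obtain ⟨p1, q1, hm1, hzx1, hzy1⟩ := key 1
  obtain ⟨p2, q2, hm2, hzx2, hzy2⟩ := key 2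
  have e01 : min p0 q0 = min p1 q1 := by
    have := mismatch_unique hm0.1 hm0.2 hm1.1 hm1.2; omega
  have e02 : min p0 q0 = min p2 q2 := by
    have := mismatch_unique hm0.1 hm0.2 hm2.1 hm2.2; omega
  have D : ∀ i : Fin 3,
      z i = x.take (min p0 q0) ++ v ++ x.drop (min p0 q0 + u.length) ∨
      z i = y.take (min p0 q0) ++ u ++ y.drop (min p0 q0 + v.length) := by
    intro i
    fin_cases i
    · rcases min_choice p0 q0 with h | h
      · left; show z 0 = _; rw [h]; exact hzx0
      · right; show z 0 = _; rw [h]; exact hzy0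
    · rcases min_choice p1 q1 with h | h
      · left; show z 1 = _; rw [e01, h]; exact hzx1
      · right; show z 1 = _; rw [e01, h]; exact hzy1
    · rcases min_choice p2 q2 with h | h
      · left; show z 2 = _; rw [e02, h]; exact hzx2
      · right; show z 2 = _; rw [e02, h]; exact hzy2
  rcases D 0 with h0 | h0 <;> rcases D 1 with h1 | h1 <;> rcases D 2 with h2 | h2 <;>
    first
      | exact absurd (hinj (h0.trans h1.symm)) (by decide)
      | exact absurd (hinj (h0.trans h2.symm)) (by decide)
      | exact absurd (hinj (h1.trans h2.symm)) (by decide)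

/-- Reversal transfer. -/
lemma mk_reverse {u v : List A} (h : MkEmbeddable u v 3) :
    MkEmbeddable u.reverse v.reverse 3 := by
  obtain ⟨x, y, z, hinj, hxz, hyz, hxy, hstep⟩ := h
  have stepRev : ∀ {a b : List A}, Step u v a b → Step u.reverse v.reverse a.reverse b.reverse := by
    rintro a b ⟨p, q, rfl, rfl⟩
    exact ⟨q.reverse, p.reverse, by simp [List.reverse_append, List.append_assoc],
      by simp [List.reverse_append, List.append_assoc]⟩
  refine ⟨x.reverse, y.reverse, fun i => (z i).reverse,
    fun i j h => hinj (List.reverse_injective h),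
    fun i h => hxz i (List.reverse_injective h),
    fun i h => hyz i (List.reverse_injective h),
    fun h => hxy (List.reverse_injective h),
    fun i => ⟨stepRev (hstep i).1, stepRev (hstep i).2⟩⟩

end M3Aux

/-- if `|u| ≤ |v|` and `v` is not bordered with `u` (i.e. `u` is
not a prefix of `v` or not a suffix of `v`), then `M_3` is not embeddable in
`G_S`. -/
theorem M3_not_embeddable_of_not_bordered {A : Type*} (u v : List A)
    (hlen : u.length ≤ v.length) (hb : ¬ (u <+: v ∧ u <:+ v)) :
    ¬ MkEmbeddable u v 3 := by

  intro hM
  by_cases hp : u <+: v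
  · have hs : ¬ u <:+ v := fun hs => hb ⟨hp, hs⟩
    have hp' : ¬ u.reverse <+: v.reverse := fun h => hs (List.reverse_prefix.mp h)
    exact M3Aux.core u.reverse v.reverse (by simpa using hlen) hp' (M3Aux.mk_reverse hM)
  · exact M3Aux.core u v hlen hp hM
end

section
/- Let S = ⟨A ∣ 1 → bⁿ⟩ be a one-rule SRS whose left-hand side is the empty word and whose right-hand side is bⁿ for some letter b ∈ A and some n ≥ 1. Then M_3 is not embeddable in the reduction graph G_S. -/
/-!
Write a word as `b^(r 0) a₁ b^(r 1) ⋯ aₘ b^(r m)` with every `aᵢ ≠ b`. Inserting `bⁿ` keeps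
`a₁ ⋯ aₘ` and adds `n` to a single exponent, so for a diamond `x → zᵢ → y` we get
`r y = r x + n • e (jᵢ) + n • e (kᵢ)`, and the `jᵢ` are distinct because the `zᵢ` are.
Comparing two branches, the multiset `{jᵢ, kᵢ}` is independent of `i`, which forces
`jᵢ = kᵢ'` for `i ≠ i'`; with three branches this gives `j₀ = k₂ = j₁`.
-/

section RunLengths

variable {A : Type*} [DecidableEq A] (b : A)

/-- `runLengths b w t` is the exponent `r t` in `w = b^(r 0) a₁ b^(r 1) a₂ ⋯ aₘ b^(r m)`,
where `a₁ ⋯ aₘ` are the letters of `w` other than `b`; it is `0` for `t > m`. -/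
def runLengths : List A → ℕ → ℕ
  | [], _ => 0
  | a :: w, 0 => if a = b then runLengths w 0 + 1 else 0
  | a :: w, t + 1 => if a = b then runLengths w (t + 1) else runLengths w t

theorem runLengths_replicate_append (n : ℕ) (q : List A) :
    runLengths b (List.replicate n b ++ q) = runLengths b q + Pi.single 0 n := by
  induction n with
  | zero => simp
  | succ n ih =>
    funext t
    have ht := congrFun ih t
    cases t <;> simp_all [List.replicate_succ, runLengths]
    omega

theorem runLengths_insert_replicate (n : ℕ) (p q : List A) :
    runLengths b (p ++ List.replicate n b ++ q) =
      runLengths b (p ++ q) + Pi.single (p.countP (· ≠ b)) n := by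
  induction p with
  | nil => simpa using runLengths_replicate_append b n q
  | cons a p ih =>
    funext t
    have ih' := congrFun ih
    by_cases ha : a = b
    · subst ha
      cases t <;> simp_all [runLengths]
      omega
    · cases t <;> simp_all [runLengths, Pi.single_apply]

theorem eq_of_filter_eq_of_runLengths_eq {w w' : List A}
    (hf : w.filter (· ≠ b) = w'.filter (· ≠ b)) (hr : runLengths b w = runLengths b w') :
    w = w' := by
  induction w generalizing w' with
  | nil =>
    cases w' with
    | nil => rfl
    | cons a' w' =>
      have h0 := congrFun hr 0
      by_cases ha' : a' = b <;> simp_all [runLengths]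
  | cons a w ih =>
    cases w' with
    | nil =>
      have h0 := congrFun hr 0
      by_cases ha : a = b <;> simp_all [runLengths]
    | cons a' w' =>
      have h0 := congrFun hr 0
      by_cases ha : a = b <;> by_cases ha' : a' = b
      · subst ha ha'
        refine congrArg _ (ih (by simpa using hf) (funext fun t => ?_))
        have ht := congrFun hr t
        cases t <;> simp_all [runLengths]
      · simp_all [runLengths]
      · simp_all [runLengths]
      · obtain ⟨rfl, htail⟩ := List.cons_eq_cons.mp (by simpa [ha, ha'] using hf)
        refine congrArg _ (ih (by simpa using htail) (funext fun t => ?_))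
        simpa [runLengths, ha] using congrFun hr (t + 1)

theorem Step.filter_ne_of_nil_replicate {n : ℕ} {w w' : List A}
    (h : Step [] (List.replicate n b) w w') : w'.filter (· ≠ b) = w.filter (· ≠ b) := by
  obtain ⟨p, q, rfl, rfl⟩ := h
  simp

theorem Step.exists_runLengths_eq_add_single {n : ℕ} {w w' : List A}
    (h : Step [] (List.replicate n b) w w') :
    ∃ j, runLengths b w' = runLengths b w + Pi.single j n := by
  obtain ⟨p, q, rfl, rfl⟩ := h
  exact ⟨p.countP (· ≠ b), by simpa using runLengths_insert_replicate b n p q⟩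

end RunLengths

theorem eq_of_single_add_single_eq {ι : Type*} [DecidableEq ι] {n : ℕ} (hn : n ≠ 0)
    {j k j' k' : ι} (hj : j ≠ j')
    (h : (Pi.single j n + Pi.single k n : ι → ℕ) = Pi.single j' n + Pi.single k' n) :
    j = k' := by
  rcases (Pi.single_add_single_eq_single_add_single hn hn).mp h with
    ⟨hjj, -⟩ | ⟨-, hjk, -⟩ | ⟨hnn, -⟩
  · exact absurd hjj hj
  · exact hjk
  · omega

/-- for the SRS `⟨A ∣ 1 → bⁿ⟩` with `n ≥ 1`, `M_3` is not
embeddable in `G_S`. -/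
theorem M3_not_embeddable_one_to_power {A : Type*} (b : A) (n : ℕ) (hn : 1 ≤ n) :
    ¬ MkEmbeddable ([] : List A) (List.replicate n b) 3 := by
  classical
  rintro ⟨x, y, z, hz, -, -, -, hstep⟩
  have hfilter i : (z i).filter (· ≠ b) = x.filter (· ≠ b) :=
    (hstep i).1.filter_ne_of_nil_replicate b
  choose j hj using fun i => (hstep i).1.exists_runLengths_eq_add_single b
  choose k hk using fun i => (hstep i).2.exists_runLengths_eq_add_single b
  have hj_inj : Function.Injective j := fun i i' h =>
    hz (eq_of_filter_eq_of_runLengths_eq b ((hfilter i).trans (hfilter i').symm)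
      (by rw [hj, hj, h]))
  have hy : ∀ i, runLengths b y = runLengths b x + (Pi.single (j i) n + Pi.single (k i) n) :=
    fun i => by rw [hk, hj, add_assoc]
  have hcross : ∀ i i', i ≠ i' → j i = k i' := fun i i' hii' =>
    eq_of_single_add_single_eq (by omega) (hj_inj.ne hii')
      (add_left_cancel ((hy i).symm.trans (hy i')))
  exact absurd (hj_inj ((hcross 0 2 (by decide)).trans (hcross 1 2 (by decide)).symm))
    (by decide)
end

section
/- Let A be an alphabet containing two distinct letters a and b, and let S = ⟨A ∣ 1 → ab⟩ be the one-rule SRS whose left-hand side is the empty word and whose right-hand side is the two-letter word ab. Then for every natural number k ≥ 1, the graph M_k is embeddable in the reduction graph G_S. -/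
/-- `pw w n = w^n`. -/
def pw {A : Type*} (w : List A) : ℕ → List A
  | 0 => []
  | n+1 => w ++ pw w n

lemma pw_add {A : Type*} (w : List A) (m n : ℕ) :
    pw w (m + n) = pw w m ++ pw w n := by
  induction m with
  | zero => simp [pw]
  | succ m ih =>
      have : m + 1 + n = (m + n) + 1 := by omega
      rw [this]
      simp [pw, ih, List.append_assoc]

lemma pw_len {A : Type*} (w : List A) (n : ℕ) :
    (pw w n).length = n * w.length := by
  induction n with
  | zero => simp [pw]
  | succ n ih => simp [pw, ih]; ring

lemma key {A : Type*} (a b : A) (hab : a ≠ b) (i d : ℕ)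
    (s t : List A)
    (h : [a,b] ++ (pw [a,a,b,b] i ++ ([a,b] ++ s))
       = [a,b] ++ (pw [a,a,b,b] i ++ (pw [a,a,b,b] (d+1) ++ t))) : False := by
  have h2 := List.append_cancel_left (List.append_cancel_left h)
  rw [show pw [a,a,b,b] (d+1) = [a,a,b,b] ++ pw [a,a,b,b] d from rfl] at h2
  simp at h2
  exact hab h2.1.symm

/-- for the SRS `⟨A ∣ 1 → ab⟩` with `a ≠ b`, `M_k` is embeddable
in `G_S` for every `k ≥ 1`. -/
theorem Mk_embeddable_one_to_ab {A : Type*} (a b : A) (hab : a ≠ b)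
    (k : ℕ) (hk : 1 ≤ k) :
    MkEmbeddable ([] : List A) [a, b] k := by
  unfold MkEmbeddable Step
  set w : List A := [a,a,b,b] with hw
  set c : List A := [a,b] with hc
  refine ⟨c ++ pw w k ++ c, c ++ pw w (k+1) ++ c,
    fun i => c ++ pw w i.val ++ c ++ pw w (k - i.val) ++ c, ?_, ?_, ?_, ?_, ?_⟩
  · -- injectivity
    intro i j h
    dsimp only at h
    by_contra hne
    have hne' : i.val ≠ j.val := fun hh => hne (Fin.ext hh)
    rcases lt_or_gt_of_ne hne' with hij | hij
    · obtain ⟨d, hd⟩ : ∃ d, j.val = i.val + (d+1) := ⟨j.val - i.val - 1, by omega⟩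
      rw [hd, pw_add] at h
      simp only [List.append_assoc] at h
      exact key a b hab i.val d _ _ h
    · obtain ⟨d, hd⟩ : ∃ d, i.val = j.val + (d+1) := ⟨i.val - j.val - 1, by omega⟩
      rw [hd, pw_add] at h
      simp only [List.append_assoc] at h
      exact key a b hab j.val d _ _ h.symm
  · intro i h
    have hi := i.isLt
    have := congrArg List.length h
    simp [pw_len, hc, hw] at this
    omega
  · intro i h
    have hi := i.isLt
    have := congrArg List.length h
    simp [pw_len, hc, hw] at this
    omega
  · intro h
    have := congrArg List.length h
    simp [pw_len, hc, hw] at this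
  · intro i
    have hi := i.isLt
    constructor
    · refine ⟨c ++ pw w i.val, pw w (k - i.val) ++ c, ?_, by simp [List.append_assoc]⟩
      have h1 : pw w k = pw w i.val ++ pw w (k - i.val) := by
        rw [← pw_add]; congr 1; omega
      simp [h1, List.append_assoc]
    · refine ⟨c ++ pw w i.val ++ [a], [b] ++ pw w (k - i.val) ++ c, ?_, ?_⟩
      · simp [hc, List.append_assoc]
      · have h1 : pw w (k+1) = pw w i.val ++ (w ++ pw w (k - i.val)) := by
          rw [show k + 1 = i.val + ((k - i.val) + 1) by omega, pw_add]
          rfl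
        rw [h1]; simp [hc, hw, List.append_assoc]
end

section
/- Let S = ⟨A ∣ 1 → v⟩ be a one-rule SRS whose left-hand side is the empty word, and suppose v contains at least two distinct letters (equivalently, v ≠ bⁿ for every letter b ∈ A and every n). Then for every natural number k ≥ 1, the graph M_k is embeddable in the reduction graph G_S. -/
/-!
Write `v = t d` with the first letter of `d` different from the first letter of `v`, and let
`U = t v d` be `v` with a second copy of `v` inserted at the cut. For `i ≤ k` the word
`U^i v U^(k-i)` arises from `U^k` by one insertion of `v`, and inserting `v` once more, right
after `U^i t`, turns it into `U^(k+1)`. These middle words are pairwise distinct: for `i < j`,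
after the common prefix `U^i t` one continues with `d` and the other with `U = t v d`, whose
letter at that position is the first letter of `v`. Lengths separate all other pairs.
-/

open List

theorem step_nil_flatten_replicate {A : Type*} (u v : List A) {i n : ℕ} (hi : i ≤ n) :
    Step [] v (replicate n u).flatten
      ((replicate i u).flatten ++ v ++ (replicate (n - i) u).flatten) := by
  refine ⟨(replicate i u).flatten, (replicate (n - i) u).flatten, ?_, rfl⟩
  rw [append_nil, ← flatten_append, ← replicate_add, Nat.add_sub_cancel' hi]

theorem length_flatten_replicate {A : Type*} (u : List A) (n : ℕ) :
    (replicate n u).flatten.length = n * u.length := by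
  simp

theorem length_flatten_replicate_append {A : Type*} (u v : List A) {i n : ℕ} (hi : i ≤ n) :
    ((replicate i u).flatten ++ v ++ (replicate (n - i) u).flatten).length =
      n * u.length + v.length := by
  have : i * u.length + (n - i) * u.length = n * u.length := by
    rw [← add_mul, Nat.add_sub_cancel' hi]
  simp only [length_append, length_flatten_replicate]
  omega

theorem exists_append_head?_ne {A : Type*} {v : List A} (hv : ∃ a ∈ v, ∃ b ∈ v, a ≠ b) :
    ∃ t d : List A, v = t ++ d ∧ d ≠ [] ∧ d.head? ≠ v.head? := by
  obtain ⟨a, ha, b, hb, hab⟩ := hv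
  obtain ⟨c, w, rfl⟩ := exists_cons_of_ne_nil (ne_nil_of_mem ha)
  obtain ⟨e, he, hec⟩ : ∃ e ∈ c :: w, e ≠ c := by
    by_cases hac : a = c
    · exact ⟨b, hb, fun hbc => hab (hac.trans hbc.symm)⟩
    · exact ⟨a, ha, hac⟩
  obtain ⟨t, d, hsplit⟩ := mem_iff_append.mp he
  exact ⟨t, e :: d, hsplit, cons_ne_nil _ _, by simpa using hec⟩

theorem append_ne_append_of_head?_ne {A : Type*} {l₁ l₂ : List A} (h₁ : l₁ ≠ []) (h₂ : l₂ ≠ [])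
    (h : l₁.head? ≠ l₂.head?) (r₁ r₂ : List A) : l₁ ++ r₁ ≠ l₂ ++ r₂ := by
  obtain ⟨a, l₁, rfl⟩ := exists_cons_of_ne_nil h₁
  obtain ⟨b, l₂, rfl⟩ := exists_cons_of_ne_nil h₂
  simp_all

section SelfInsert

variable {A : Type*} (t d : List A)

def selfInsert : List A := t ++ (t ++ d) ++ d

theorem length_selfInsert : (selfInsert t d).length = 2 * (t ++ d).length := by
  simp only [selfInsert, length_append]
  omega

theorem step_selfInsert_pow {i n : ℕ} (hi : i ≤ n) :
    Step [] (t ++ d)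
      ((replicate i (selfInsert t d)).flatten ++ (t ++ d) ++
        (replicate (n - i) (selfInsert t d)).flatten)
      (replicate (n + 1) (selfInsert t d)).flatten := by
  have hsplit : n + 1 = i + 1 + (n - i) := by omega
  refine ⟨(replicate i (selfInsert t d)).flatten ++ t,
    d ++ (replicate (n - i) (selfInsert t d)).flatten, by simp, ?_⟩
  rw [hsplit, replicate_add, replicate_add]
  simp [selfInsert]

theorem append_ne_selfInsert_append (hd : d ≠ []) (hhead : d.head? ≠ (t ++ d).head?)
    (r₁ r₂ : List A) : t ++ d ++ r₁ ≠ selfInsert t d ++ r₂ := by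
  intro h
  refine append_ne_append_of_head?_ne hd (by simp [hd]) hhead r₁ (d ++ r₂)
    (append_cancel_left (as := t) ?_)
  simpa [selfInsert] using h

theorem selfInsert_pow_injective {k : ℕ} (hd : d ≠ []) (hhead : d.head? ≠ (t ++ d).head?) :
    Function.Injective fun i : Fin k =>
      (replicate i (selfInsert t d)).flatten ++ (t ++ d) ++
        (replicate (k - i) (selfInsert t d)).flatten := by
  refine .of_lt_imp_ne fun i j hij heq => ?_
  have hj : (j : ℕ) = i + (1 + (j - i - 1)) := by omega
  rw [hj, replicate_add, replicate_add, flatten_append, flatten_append] at heq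
  simp only [append_assoc, append_cancel_left_eq, replicate_one, flatten_singleton] at heq
  exact append_ne_selfInsert_append t d hd hhead _ _ (by simpa only [append_assoc] using heq)

end SelfInsert

theorem Mk_embeddable_special_general {A : Type*} (v : List A)
    (hv : ∃ a ∈ v, ∃ b ∈ v, a ≠ b) (k : ℕ) :
    MkEmbeddable ([] : List A) v k := by
  obtain ⟨t, d, rfl, hd, hhead⟩ := exists_append_head?_ne hv
  set U := selfInsert t d
  have hU : U.length = 2 * (t ++ d).length := length_selfInsert t d
  have hvpos : 0 < (t ++ d).length := by simp [length_pos_iff.mpr hd]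
  have hz (i : Fin k) := length_flatten_replicate_append U (t ++ d) i.2.le
  refine ⟨(replicate k U).flatten, (replicate (k + 1) U).flatten,
    fun i => (replicate i U).flatten ++ (t ++ d) ++ (replicate (k - i) U).flatten,
    selfInsert_pow_injective t d hd hhead, fun i h => ?_, fun i h => ?_, fun h => ?_,
    fun i => ⟨step_nil_flatten_replicate U (t ++ d) i.2.le, step_selfInsert_pow t d i.2.le⟩⟩
  all_goals
    have hlen := congrArg length h
    simp only [length_flatten_replicate, hz, add_mul, one_mul] at hlen
    omega

/-- for the SRS `⟨A ∣ 1 → v⟩` where `v` contains at least two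
distinct letters, `M_k` is embeddable in `G_S` for every `k ≥ 1`. -/
theorem Mk_embeddable_special {A : Type*} (v : List A)
    (hv : ∃ a ∈ v, ∃ b ∈ v, a ≠ b) (k : ℕ) (hk : 1 ≤ k) :
    MkEmbeddable ([] : List A) v k :=
  Mk_embeddable_special_general v hv k
end

section
/- Let S = ⟨A ∣ 1 → v⟩ be a one-rule SRS whose left-hand side is the empty word, with v nonempty and A containing at least two letters. If v = bⁿ for some letter b ∈ A (and some n ≥ 1), then k = 2 is the maximal value such that M_k is embeddable in the reduction graph G_S: M_2 is embeddable in G_S but M_3 is not. Otherwise, M_k is embeddable in G_S for every natural number k ≥ 1. -/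
/-! ### Auxiliary machinery -/

section Aux

variable {A : Type*}

/-- length of a step -/
theorem step_length {v w w' : List A} (h : Step [] v w w') :
    w'.length = w.length + v.length := by
  obtain ⟨p, q, h1, h2⟩ := h
  subst h1; subst h2
  simp [List.length_append]; omega

/-- package an `M_k` witness, deriving the distinctness of `x`, `y` from
lengths. -/
theorem mk_of_steps {v : List A} (hv : v ≠ []) {k : ℕ} (hk : 0 < k)
    (x y : List A) (z : Fin k → List A) (hinj : Function.Injective z)
    (hsteps : ∀ i, Step [] v x (z i) ∧ Step [] v (z i) y) :
    MkEmbeddable ([] : List A) v k := by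
  have hvpos : 0 < v.length := List.length_pos_iff.2 hv
  have hlen : ∀ i, (z i).length = x.length + v.length :=
    fun i => step_length (hsteps i).1
  have hleny : ∀ i, y.length = (z i).length + v.length :=
    fun i => step_length (hsteps i).2
  refine ⟨x, y, z, hinj, ?_, ?_, ?_, hsteps⟩
  · intro i h
    have h1 := hlen i
    have : x.length = (z i).length := by rw [h]
    omega
  · intro i h
    have h2 := hleny i
    have : y.length = (z i).length := by rw [h]
    omega
  · intro h
    subst h
    have h1 := hlen ⟨0, hk⟩; have h2 := hleny ⟨0, hk⟩
    omega

open Classical in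
/-- run lengths of the letter `c` in a word (including empty runs at both
ends and between consecutive non-`c` letters). -/
noncomputable def runsC (c : A) : List A → List ℕ
  | [] => [0]
  | a :: w => if a = c then ((runsC c w).headI + 1) :: (runsC c w).tail
      else 0 :: runsC c w

open Classical in
/-- the non-`c` letters of a word, in order. -/
noncomputable def lettersC (c : A) : List A → List A
  | [] => []
  | a :: w => if a = c then lettersC c w else a :: lettersC c w

theorem runsC_ne_nil (c : A) (w : List A) : runsC c w ≠ [] := by
  cases w with
  | nil => simp [runsC]
  | cons a w => simp only [runsC]; split <;> simp

theorem runsC_cons_self (c : A) (w : List A) :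
    runsC c (c :: w) = ((runsC c w).headI + 1) :: (runsC c w).tail := by
  simp [runsC]

theorem runsC_cons_ne (c : A) {a : A} (w : List A) (h : a ≠ c) :
    runsC c (a :: w) = 0 :: runsC c w := by
  simp [runsC, h]

theorem lettersC_cons_self (c : A) (w : List A) :
    lettersC c (c :: w) = lettersC c w := by
  simp [lettersC]

theorem lettersC_cons_ne (c : A) {a : A} (w : List A) (h : a ≠ c) :
    lettersC c (a :: w) = a :: lettersC c w := by
  simp [lettersC, h]

theorem runsC_eq_cons (c : A) (w : List A) :
    runsC c w = (runsC c w).headI :: (runsC c w).tail := by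
  cases hw : runsC c w with
  | nil => exact absurd hw (runsC_ne_nil c w)
  | cons x l => simp

theorem runsC_replicate_append (c : A) (n : ℕ) (q : List A) :
    runsC c (List.replicate n c ++ q)
      = (n + (runsC c q).headI) :: (runsC c q).tail := by
  induction n with
  | zero => simpa using (runsC_eq_cons c q)
  | succ n ih =>
    rw [List.replicate_succ, List.cons_append, runsC_cons_self, ih]
    simp only [List.headI_cons, List.tail_cons]
    congr 1
    omega

theorem lettersC_replicate_append (c : A) (n : ℕ) (q : List A) :
    lettersC c (List.replicate n c ++ q) = lettersC c q := by
  induction n with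
  | zero => simp
  | succ n ih => rw [List.replicate_succ, List.cons_append, lettersC_cons_self, ih]

/-- effect of inserting `cⁿ` on letters and runs. -/
theorem runsC_insert (c : A) (n : ℕ) (p q : List A) :
    lettersC c (p ++ List.replicate n c ++ q) = lettersC c (p ++ q) ∧
    ∃ r₁ r₂ : List ℕ, ∃ m : ℕ,
      runsC c (p ++ q) = r₁ ++ m :: r₂ ∧
      runsC c (p ++ List.replicate n c ++ q) = r₁ ++ (m + n) :: r₂ := by
  induction p with
  | nil =>
    refine ⟨by simpa using lettersC_replicate_append c n q,
      [], (runsC c q).tail, (runsC c q).headI, by simpa using runsC_eq_cons c q, ?_⟩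
    simp only [List.nil_append, runsC_replicate_append]
    congr 1
    omega
  | cons a p ih =>
    obtain ⟨hl, r₁, r₂, m, h1, h2⟩ := ih
    by_cases hac : a = c
    · subst hac
      refine ⟨?_, ?_⟩
      · simp only [List.cons_append, lettersC_cons_self]; exact hl
      · cases r₁ with
        | nil =>
          simp only [List.nil_append] at h1 h2
          refine ⟨[], r₂, m + 1, ?_, ?_⟩
          · simp only [List.cons_append, runsC_cons_self, h1, List.headI_cons,
              List.tail_cons, List.nil_append]
          · simp only [List.cons_append, runsC_cons_self, h2, List.headI_cons,
              List.tail_cons, List.nil_append]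
            congr 1
            omega
        | cons u r₁' =>
          refine ⟨(u + 1) :: r₁', r₂, m, ?_, ?_⟩
          · simp only [List.cons_append, runsC_cons_self, h1, List.headI_cons,
              List.tail_cons]
          · simp only [List.cons_append, runsC_cons_self, h2, List.headI_cons,
              List.tail_cons]
    · refine ⟨?_, 0 :: r₁, r₂, m, ?_, ?_⟩
      · simp only [List.cons_append, lettersC_cons_ne c _ hac, hl]
      · simp only [List.cons_append, runsC_cons_ne c _ hac, h1]
      · simp only [List.cons_append, runsC_cons_ne c _ hac, h2]

theorem getElem?_append_cons_self (r₁ r₂ : List ℕ) (m : ℕ) :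
    (r₁ ++ m :: r₂)[r₁.length]? = some m := by
  rw [List.getElem?_append_right (le_refl _)]
  simp

theorem getElem?_append_cons_ne (r₁ r₂ : List ℕ) (m m' : ℕ) {i : ℕ}
    (hi : i ≠ r₁.length) :
    (r₁ ++ m :: r₂)[i]? = (r₁ ++ m' :: r₂)[i]? := by
  rcases Nat.lt_or_ge i r₁.length with h | h
  · rw [List.getElem?_append_left h, List.getElem?_append_left h]
  · have h' : r₁.length < i := lt_of_le_of_ne h (Ne.symm hi)
    rw [List.getElem?_append_right h, List.getElem?_append_right h]
    obtain ⟨d, hd⟩ : ∃ d, i - r₁.length = d + 1 := ⟨i - r₁.length - 1, by omega⟩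
    rw [hd]
    simp

/-- a step of `⟨A ∣ 1 → cⁿ⟩` keeps the letters and bumps one run by `n`. -/
theorem step_runs (c : A) {n : ℕ} {w w' : List A}
    (h : Step [] (List.replicate n c) w w') :
    lettersC c w' = lettersC c w ∧
    ∃ j : ℕ, (∃ m : ℕ, (runsC c w)[j]? = some m ∧ (runsC c w')[j]? = some (m + n)) ∧
      ∀ i, i ≠ j → (runsC c w')[i]? = (runsC c w)[i]? := by
  obtain ⟨p, q, h1, h2⟩ := h
  rw [List.append_nil] at h1
  subst h1; subst h2
  obtain ⟨hl, r₁, r₂, m, hr1, hr2⟩ := runsC_insert c n p q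
  refine ⟨hl, r₁.length, ⟨m, ?_, ?_⟩, ?_⟩
  · rw [hr1]; exact getElem?_append_cons_self r₁ r₂ m
  · rw [hr2]; exact getElem?_append_cons_self r₁ r₂ (m + n)
  · intro i hij
    rw [hr1, hr2]
    exact getElem?_append_cons_ne r₁ r₂ (m + n) m hij

/-- injectivity: a word is determined by its letters and runs. -/
theorem runsC_lettersC_inj (c : A) : ∀ w₁ w₂ : List A,
    runsC c w₁ = runsC c w₂ → lettersC c w₁ = lettersC c w₂ → w₁ = w₂ := by
  intro w₁
  induction w₁ with
  | nil =>
    intro w₂ hr hl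
    cases w₂ with
    | nil => rfl
    | cons b w' =>
      by_cases hbc : b = c
      · subst hbc
        rw [runsC_cons_self] at hr
        simp [runsC] at hr
      · rw [lettersC_cons_ne c _ hbc] at hl
        simp [lettersC] at hl
  | cons a w' ih =>
    intro w₂ hr hl
    cases w₂ with
    | nil =>
      by_cases hac : a = c
      · subst hac
        rw [runsC_cons_self] at hr
        simp [runsC] at hr
      · rw [lettersC_cons_ne c _ hac] at hl
        simp [lettersC] at hl
    | cons b w'' =>
      by_cases hac : a = c <;> by_cases hbc : b = c
      · rw [hac] at hr hl ⊢
        rw [hbc] at hr hl ⊢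
        rw [runsC_cons_self, runsC_cons_self] at hr
        rw [lettersC_cons_self, lettersC_cons_self] at hl
        injection hr with h1 h2
        have hrw : runsC c w' = runsC c w'' := by
          rw [runsC_eq_cons c w', runsC_eq_cons c w'', h2]
          congr 1
          omega
        rw [ih w'' hrw hl]
      · rw [hac] at hr
        rw [runsC_cons_self, runsC_cons_ne c _ hbc] at hr
        injection hr with h1 h2
        exact absurd h1 (by omega)
      · rw [hbc] at hr
        rw [runsC_cons_self, runsC_cons_ne c _ hac] at hr
        injection hr with h1 h2
        exact absurd h1 (by omega)
      · rw [runsC_cons_ne c _ hac, runsC_cons_ne c _ hbc] at hr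
        rw [lettersC_cons_ne c _ hac, lettersC_cons_ne c _ hbc] at hl
        injection hr with _ hr'
        injection hl with hab' hl'
        rw [hab', ih w'' hr' hl']

/-- `M_3` does not embed when `v = cⁿ`. -/
theorem not_M3 (c : A) (n : ℕ) (hn : 1 ≤ n) :
    ¬ MkEmbeddable ([] : List A) (List.replicate n c) 3 := by
  rintro ⟨x, y, z, hinj, hxz, hyz, hxy, hsteps⟩
  have H1 : ∀ i : Fin 3, ∃ j : ℕ,
      (∃ m : ℕ, (runsC c x)[j]? = some m ∧ (runsC c (z i))[j]? = some (m + n)) ∧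
      ∀ t : ℕ, t ≠ j → (runsC c (z i))[t]? = (runsC c x)[t]? :=
    fun i => (step_runs c (hsteps i).1).2
  have H2 : ∀ i : Fin 3, ∃ j : ℕ,
      (∃ m : ℕ, (runsC c (z i))[j]? = some m ∧ (runsC c y)[j]? = some (m + n)) ∧
      ∀ t : ℕ, t ≠ j → (runsC c y)[t]? = (runsC c (z i))[t]? :=
    fun i => (step_runs c (hsteps i).2).2
  have hlet1 : ∀ i : Fin 3, lettersC c (z i) = lettersC c x :=
    fun i => (step_runs c (hsteps i).1).1
  choose j hj hj' using H1
  choose l hl hl' using H2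
  -- `j` is injective
  have jinj : ∀ i i' : Fin 3, j i = j i' → i = i' := by
    intro i i' hjj
    apply hinj
    apply runsC_lettersC_inj c
    · obtain ⟨m, hm1, hm2⟩ := hj i
      obtain ⟨m', hm1', hm2'⟩ := hj i'
      have hmm : m = m' := by
        rw [hjj] at hm1
        rw [hm1] at hm1'
        exact Option.some.inj hm1'
      apply List.ext_getElem?
      intro t
      by_cases ht : t = j i
      · rw [ht, hm2, hjj, hm2', hmm]
      · rw [hj' i t ht, ← hj' i' t (by rw [← hjj]; exact ht)]
    · rw [hlet1 i, hlet1 i']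
  -- each `j i` is a position where `runsC y` differs from `runsC x`
  have hdiff : ∀ i : Fin 3, (runsC c y)[j i]? ≠ (runsC c x)[j i]? := by
    intro i
    obtain ⟨m, hm1, hm2⟩ := hj i
    by_cases hli : l i = j i
    · obtain ⟨m₂, hm1', hm2'⟩ := hl i
      rw [hli] at hm1' hm2'
      rw [hm2] at hm1'
      have : m₂ = m + n := (Option.some.injEq _ _ ▸ hm1'.symm)
      rw [hm2', hm1, this]
      intro hEq
      have := Option.some.injEq (m + n + n) m ▸ hEq
      omega
    · rw [hl' i (j i) (fun hh => hli hh.symm), hm2, hm1]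
      intro hEq
      have := Option.some.injEq (m + n) m ▸ hEq
      omega
  -- positions where `runsC y` differs from `runsC x` lie in `{j 0, l 0}`
  have hcontain : ∀ i : Fin 3, j i = j 0 ∨ j i = l 0 := by
    intro i
    by_contra hcon
    push_neg at hcon
    apply hdiff i
    rw [hl' 0 (j i) hcon.2, hj' 0 (j i) hcon.1]
  have h10 : j 1 ≠ j 0 := fun h => by simpa using jinj 1 0 h
  have h20 : j 2 ≠ j 0 := fun h => by simpa using jinj 2 0 h
  have h21 : j 2 ≠ j 1 := fun h => by simpa using jinj 2 1 h
  have e1 : j 1 = l 0 := (hcontain 1).resolve_left h10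
  have e2 : j 2 = l 0 := (hcontain 2).resolve_left h20
  exact h21 (e2.trans e1.symm)

/-- `M_2` embeds when `v = cⁿ`, given a second letter `d ≠ c`. -/
theorem M2_embeds (c d : A) (hd : d ≠ c) (n : ℕ) (hn : 1 ≤ n) :
    MkEmbeddable ([] : List A) (List.replicate n c) 2 := by
  obtain ⟨n', rfl⟩ : ∃ n', n = n' + 1 := ⟨n - 1, by omega⟩
  set v := List.replicate (n' + 1) c with hvdef
  have hv : v ≠ [] := by simp [hvdef]
  have hvc : v = c :: List.replicate n' c := List.replicate_succ ..
  have hne : v ++ [d] ≠ [d] ++ v := by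
    rw [hvc]
    intro h
    injection h with h1 _
    exact hd h1.symm
  apply mk_of_steps hv (by norm_num) [d] (v ++ [d] ++ v) ![v ++ [d], [d] ++ v]
  · intro i i' h
    fin_cases i <;> fin_cases i'
    · rfl
    · exact absurd (by simpa using h) hne
    · exact absurd (Eq.symm (by simpa using h)) hne
    · rfl
  · intro i
    fin_cases i
    · exact ⟨⟨[], [d], by simp, by simp⟩, ⟨v ++ [d], [], by simp, by simp⟩⟩
    · exact ⟨⟨[d], [], by simp, by simp⟩, ⟨[], [d] ++ v, by simp, by simp⟩⟩

/-- `n`-fold repetition of a word. -/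
def Pw (B : List A) : ℕ → List A
  | 0 => []
  | n + 1 => B ++ Pw B n

theorem Pw_add (B : List A) (m n : ℕ) : Pw B (m + n) = Pw B m ++ Pw B n := by
  induction m with
  | zero => simp [Pw]
  | succ m ih => rw [show m + 1 + n = (m + n) + 1 by omega]; simp [Pw, ih]

/-- the words `z_i` of the `M_{m+3}` witness: `B^{m+1} v`, `v B^{m+1}` and
`v Bⁱ v B^{m-i} v` for `0 ≤ i ≤ m`. -/
def gw (v B : List A) (m : ℕ) : ℕ → List A
  | 0 => Pw B (m + 1) ++ v
  | 1 => v ++ Pw B (m + 1)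
  | (i + 2) => v ++ (Pw B i ++ (v ++ (Pw B (m - i) ++ v)))

section Construct

variable {v B : List A} (hK : ∀ X Y : List A, v ++ X ≠ B ++ Y) (m : ℕ)

include hK

theorem gw01 : gw v B m 0 ≠ gw v B m 1 := by
  intro h
  exact hK (Pw B (m + 1)) (Pw B m ++ v) (by simpa [gw, Pw, List.append_assoc] using h.symm)

theorem gw0w (i : ℕ) : gw v B m 0 ≠ gw v B m (i + 2) := by
  intro h
  exact hK _ (Pw B m ++ v) (by simpa [gw, Pw, List.append_assoc] using h.symm)

theorem gw1w (i : ℕ) (hi : i ≤ m) : gw v B m 1 ≠ gw v B m (i + 2) := by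
  intro h
  simp only [gw] at h
  rw [show Pw B (m + 1) = Pw B i ++ (B ++ Pw B (m - i)) from by
    rw [show B ++ Pw B (m - i) = Pw B (m - i + 1) from rfl, ← Pw_add]
    congr 1
    omega] at h
  have h2 := List.append_cancel_left h
  have h3 := List.append_cancel_left h2
  exact hK _ _ h3.symm

theorem gww {i j : ℕ} (hij : i < j) (hj : j ≤ m) :
    gw v B m (i + 2) ≠ gw v B m (j + 2) := by
  intro h
  simp only [gw] at h
  rw [show Pw B j = Pw B i ++ (B ++ Pw B (j - i - 1)) from by
    rw [show B ++ Pw B (j - i - 1) = Pw B (j - i - 1 + 1) from rfl, ← Pw_add]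
    congr 1
    omega] at h
  have h2 := List.append_cancel_left h
  rw [List.append_assoc] at h2
  have h3 := List.append_cancel_left h2
  rw [List.append_assoc] at h3
  exact hK _ _ h3

theorem gw_inj {i j : ℕ} (hi : i < m + 3) (hj : j < m + 3)
    (h : gw v B m i = gw v B m j) : i = j := by
  match i, j with
  | 0, 0 => rfl
  | 1, 1 => rfl
  | 0, 1 => exact absurd h (gw01 hK m)
  | 1, 0 => exact absurd h.symm (gw01 hK m)
  | 0, (j + 2) => exact absurd h (gw0w hK m j)
  | (i + 2), 0 => exact absurd h.symm (gw0w hK m i)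
  | 1, (j + 2) => exact absurd h (gw1w hK m j (by omega))
  | (i + 2), 1 => exact absurd h.symm (gw1w hK m i (by omega))
  | (i + 2), (j + 2) =>
    rcases lt_trichotomy i j with hlt | heq | hgt
    · exact absurd h (gww hK m hlt (by omega))
    · rw [heq]
    · exact absurd h.symm (gww hK m hgt (by omega))

end Construct

/-- the `M_{m+3}` witness for `⟨A ∣ 1 → v⟩` when `v` is not a power of a
single letter. -/
theorem construct_Mk (v : List A) (hv : v ≠ []) (hC : v.dropLast ≠ v.tail)
    (m : ℕ) : MkEmbeddable ([] : List A) v (m + 3) := by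
  obtain ⟨h, t, rfl⟩ : ∃ h t, v = h :: t :=
    ⟨v.head hv, v.tail, (List.cons_head_tail hv).symm⟩
  simp only [List.dropLast, List.tail_cons] at hC
  set B : List A := h :: ((h :: t) ++ t) with hB
  -- the key prefix inequality
  have htake : B.take (h :: t).length ≠ h :: t := by
    have key : List.take (h :: t).length B = h :: List.take t.length (h :: t) := by
      rw [hB]
      simp only [List.length_cons, List.take_succ_cons]
      rw [List.take_append_of_le_length (l₁ := h :: t) (l₂ := t) (i := t.length) (by rw [List.length_cons]; omega)]
    rw [key]
    intro hEq
    injection hEq with _ h2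
    apply hC
    rw [List.dropLast_eq_take]
    simpa using h2
  have hK : ∀ X Y : List A, (h :: t) ++ X ≠ B ++ Y := by
    intro X Y hEq
    apply htake
    have h1 := congrArg (List.take (h :: t).length) hEq
    rw [List.take_left] at h1
    rw [List.take_append_of_le_length (by rw [hB]; simp; omega)] at h1
    exact h1.symm
  apply mk_of_steps hv (by omega) ((h :: t) ++ (Pw B m ++ (h :: t)))
      ((h :: t) ++ (Pw B (m + 1) ++ (h :: t))) (fun i => gw (h :: t) B m i.val)
  · intro i j hij
    exact Fin.ext (gw_inj hK m i.isLt j.isLt hij)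
  · rintro ⟨i, hi⟩
    match i, hi with
    | 0, _ =>
      constructor
      · exact ⟨[h], t ++ (Pw B m ++ (h :: t)), by simp, by
          simp only [gw, hB, Pw, List.cons_append, List.nil_append,
            List.append_assoc, List.append_nil]⟩
      · exact ⟨[], Pw B (m + 1) ++ (h :: t), by simp [gw], by simp [gw]⟩
    | 1, _ =>
      constructor
      · refine ⟨(h :: t) ++ (Pw B m ++ [h]), t, by simp, ?_⟩
        simp only [gw]
        rw [show m + 1 = m + 1 from rfl, Pw_add (B := B) m 1]
        simp [Pw, hB, List.append_assoc]
      · exact ⟨(h :: t) ++ Pw B (m + 1), [], by simp [gw], by simp [gw]⟩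
    | (i + 2), hi =>
      have him : i ≤ m := by omega
      constructor
      · refine ⟨(h :: t) ++ Pw B i, Pw B (m - i) ++ (h :: t), ?_, by
          simp [gw, List.append_assoc]⟩
        rw [show Pw B m = Pw B i ++ Pw B (m - i) by
          rw [← Pw_add]; congr 1; omega]
        simp [List.append_assoc]
      · refine ⟨(h :: t) ++ (Pw B i ++ [h]), t ++ (Pw B (m - i) ++ (h :: t)),
          by simp [gw, List.append_assoc], ?_⟩
        rw [show Pw B (m + 1) = Pw B i ++ (B ++ Pw B (m - i)) by
          rw [show Pw B i ++ (B ++ Pw B (m - i)) = Pw B i ++ Pw B (m - i + 1) from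
            by simp [Pw], ← Pw_add]; congr 1; omega]
        simp [hB, List.append_assoc]

/-- monotonicity of embeddability in `k`. -/
theorem mk_mono {u v : List A} {k k' : ℕ} (h : MkEmbeddable u v k)
    (hk : k' ≤ k) : MkEmbeddable u v k' := by
  obtain ⟨x, y, z, hinj, hxz, hyz, hxy, hsteps⟩ := h
  exact ⟨x, y, z ∘ Fin.castLE hk,
    hinj.comp (fun i j hij => Fin.ext (by simpa using congrArg Fin.val hij)),
    fun i => hxz _, fun i => hyz _, hxy, fun i => hsteps _⟩

/-- a word whose `dropLast` equals its `tail` is constant. -/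
theorem rep_of_dropLast_eq_tail : ∀ (x : A) (l : List A),
    (x :: l).dropLast = l → x :: l = List.replicate (l.length + 1) x := by
  intro x l
  induction l generalizing x with
  | nil => intro _; simp [List.replicate]
  | cons y l ih =>
    intro hd
    have hd' : x :: (y :: l).dropLast = y :: l := hd
    injection hd' with h1 h2
    cases h1
    have h3 := ih _ h2
    rw [List.length_cons, List.replicate_succ, ← h3]

end Aux

/-- for `S = ⟨A ∣ 1 → v⟩` with `v` nonempty and `|A| ≥ 2`:
if `v = bⁿ` for some letter `b` (and `n ≥ 1`), then `k = 2` is maximal such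
that `M_k` embeds in `G_S` (`M_2` embeds but `M_3` does not); otherwise `M_k`
embeds in `G_S` for every `k ≥ 1`. -/
theorem special_SRS_dichotomy {A : Type*} (v : List A) (hv : v ≠ [])
    (a b : A) (hab : a ≠ b) :
    ((∃ (c : A) (n : ℕ), 1 ≤ n ∧ v = List.replicate n c) →
      MkEmbeddable ([] : List A) v 2 ∧ ¬ MkEmbeddable ([] : List A) v 3) ∧
    (¬ (∃ (c : A) (n : ℕ), 1 ≤ n ∧ v = List.replicate n c) →
      ∀ k : ℕ, 1 ≤ k → MkEmbeddable ([] : List A) v k) := by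
  constructor
  · rintro ⟨c, n, hn, rfl⟩
    refine ⟨?_, not_M3 c n hn⟩
    by_cases hca : c = a
    · exact M2_embeds c b (by rw [hca]; exact fun hba => hab hba.symm) n hn
    · exact M2_embeds c a (fun hac => hca hac.symm) n hn
  · intro hnp k hk
    have hC : v.dropLast ≠ v.tail := by
      intro hEq
      apply hnp
      cases v with
      | nil => exact absurd rfl hv
      | cons x l =>
        exact ⟨x, l.length + 1, by omega,
          rep_of_dropLast_eq_tail x l (by simpa using hEq)⟩
    have hmax := construct_Mk v hv hC (max k 3 - 3)
    rw [show max k 3 - 3 + 3 = max k 3 by omega] at hmax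
    exact mk_mono hmax (le_max_left k 3)
end

section
/- Let T ∈ A+ be a self-overlap-free word and let u, v ∈ Bord_T be distinct words such that v is bordered with u. Then φ_T(v) is bordered with φ_T(u) (as words over B). -/
section PhiBorderedAux

variable {A : Type*}

lemma T_prefix_glue (T : List A) (Rs : List (List A)) : T <+: glue T Rs := by
  cases Rs with
  | nil => exact List.prefix_rfl
  | cons R Rs =>
      simpa [glue, List.append_assoc] using (T.prefix_append (R ++ glue T Rs))

/-- Core synchronization: if `R ++ T ++ a = R' ++ T ++ b` with `R'` `T`-free
and `|R| ≤ |R'|`, then `|R| = |R'|`. -/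
lemma core_len {T R R' a b : List A} (hsof : SelfOverlapFree T)
    (hR' : ¬ T <:+: R')
    (heq : R ++ T ++ a = R' ++ T ++ b) (hle : R.length ≤ R'.length) :
    R.length = R'.length := by
  by_contra hne
  have hlt : R.length < R'.length := lt_of_le_of_ne hle hne
  have hRpre : R <+: R' := by
    apply List.prefix_of_prefix_length_le (l₃ := R ++ T ++ a)
    · exact (R.prefix_append (T ++ a)).trans (by rw [List.append_assoc])
    · rw [heq]
      exact (R'.prefix_append (T ++ b)).trans (by rw [List.append_assoc])
    · exact hle
  obtain ⟨s, hs⟩ := hRpre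
  have hslen : s.length = R'.length - R.length := by
    have := congrArg List.length hs
    simp only [List.length_append] at this
    omega
  have hsne : s ≠ [] := by
    intro h
    rw [h] at hslen
    simp at hslen
    omega
  have heq2 : T ++ a = s ++ (T ++ b) := by
    apply List.append_cancel_left (as := R)
    calc R ++ (T ++ a) = R ++ T ++ a := by rw [List.append_assoc]
      _ = R' ++ T ++ b := heq
      _ = (R ++ s) ++ T ++ b := by rw [hs]
      _ = R ++ (s ++ (T ++ b)) := by simp [List.append_assoc]
  by_cases hcase : T.length ≤ s.length
  · have hTpre : T <+: s := by
      apply List.prefix_of_prefix_length_le (l₃ := s ++ (T ++ b))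
      · rw [← heq2]; exact T.prefix_append a
      · exact s.prefix_append _
      · exact hcase
    have hsuf : s <:+ R' := ⟨R, hs⟩
    exact hR' (hTpre.isInfix.trans hsuf.isInfix)
  · push_neg at hcase
    have hm : T.length - s.length ≤ T.length := Nat.sub_le _ _
    have hspos : 0 < s.length := List.length_pos_iff.mpr hsne
    have hTeq : T = s ++ T.take (T.length - s.length) := by
      have h1 : T = (T ++ a).take T.length := List.take_left.symm
      rw [heq2] at h1
      rw [List.take_append,
        List.take_of_length_le (le_of_lt hcase),
        List.take_append_of_le_length hm] at h1
      exact h1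
    have hwne : T.take (T.length - s.length) ≠ [] := by
      intro h
      have := congrArg List.length h
      rw [List.length_take] at this
      simp only [List.length_nil] at this
      omega
    have hyne : T.drop (T.length - s.length) ≠ [] := by
      intro h
      have := congrArg List.length h
      rw [List.length_drop] at this
      simp only [List.length_nil] at this
      omega
    exact hsof (T.take (T.length - s.length)) s (T.drop (T.length - s.length))
      hwne hsne hyne hTeq (List.take_append_drop (T.length - s.length) T).symm

lemma core_eq {T R R' a b : List A} (hsof : SelfOverlapFree T)
    (hR : ¬ T <:+: R) (hR' : ¬ T <:+: R')
    (heq : R ++ T ++ a = R' ++ T ++ b) : R = R' := by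
  have hlen : R.length = R'.length := by
    rcases le_total R.length R'.length with h | h
    · exact core_len hsof hR' heq h
    · exact (core_len hsof hR heq.symm h).symm
  have := List.append_inj (by simpa [List.append_assoc] using heq) hlen
  exact this.1

/-- Prefix half of the main theorem. -/
lemma glue_prefix {T : List A} (hT : T ≠ []) (hsof : SelfOverlapFree T) :
    ∀ (Ru Rv : List (List A)), (∀ R ∈ Ru, ¬ T <:+: R) → (∀ R ∈ Rv, ¬ T <:+: R) →
    glue T Ru <+: glue T Rv → Ru <+: Rv := by
  intro Ru
  induction Ru with
  | nil => intro Rv _ _ _; exact Rv.nil_prefix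
  | cons R Ru' ih =>
      intro Rv hRu hRv hpre
      cases Rv with
      | nil =>
          exfalso
          have h1 := hpre.length_le
          have h2 := (T_prefix_glue T Ru').length_le
          have h3 : 0 < T.length := List.length_pos_iff.mpr hT
          simp only [glue, List.length_append] at h1
          omega
      | cons R' Rv' =>
          have hpre2 : R ++ glue T Ru' <+: R' ++ glue T Rv' := by
            rw [← List.prefix_append_right_inj T]
            simpa [glue, List.append_assoc] using hpre
          have hpre2' := hpre2
          obtain ⟨t, ht⟩ := hpre2'
          obtain ⟨a, ha⟩ := T_prefix_glue T Ru'
          obtain ⟨b, hb⟩ := T_prefix_glue T Rv'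
          have heq : R ++ T ++ (a ++ t) = R' ++ T ++ b := by
            calc R ++ T ++ (a ++ t) = (R ++ (T ++ a)) ++ t := by
                  simp [List.append_assoc]
              _ = (R ++ glue T Ru') ++ t := by rw [ha]
              _ = R' ++ glue T Rv' := ht
              _ = R' ++ T ++ b := by rw [← hb, List.append_assoc]
          have hRR' : R = R' :=
            core_eq hsof (hRu R List.mem_cons_self)
              (hRv R' List.mem_cons_self) heq
          subst hRR'
          have hpre3 : glue T Ru' <+: glue T Rv' :=
            (List.prefix_append_right_inj R).mp hpre2
          have := ih Rv' (fun X hX => hRu X (List.mem_cons_of_mem R hX))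
            (fun X hX => hRv X (List.mem_cons_of_mem R hX)) hpre3
          exact List.cons_prefix_cons.mpr ⟨rfl, this⟩

lemma glue_reverse (T : List A) (Rs : List (List A)) :
    (glue T Rs).reverse = glue T.reverse (Rs.reverse.map List.reverse) := by
  induction Rs with
  | nil => rfl
  | cons R Rs ih =>
      have hconcat : ∀ (xs : List (List A)) (x : List A),
          glue T.reverse (xs ++ [x]) = glue T.reverse xs ++ x ++ T.reverse := by
        intro xs x
        induction xs with
        | nil => simp [glue]
        | cons y ys ihy => simp [glue, ihy, List.append_assoc]
      simp only [glue, List.reverse_append, List.reverse_cons, List.map_append,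
        List.map_cons, List.map_nil, hconcat, ih]
      simp [List.append_assoc]

lemma sof_reverse {T : List A} (hsof : SelfOverlapFree T) :
    SelfOverlapFree T.reverse := by
  intro w x y hw hx hy h1 h2
  apply hsof w.reverse y.reverse x.reverse
    (by simpa using hw) (by simpa using hy) (by simpa using hx)
  · rw [← List.reverse_reverse T, h2]; simp
  · rw [← List.reverse_reverse T, h1]; simp

end PhiBorderedAux

/-- for a self-overlap-free `T ∈ A⁺` and distinct
`u, v ∈ Bord_T` (written via their canonical decompositions) such that `v` is
bordered with `u`, `φ_T(v) = Rv` is bordered with `φ_T(u) = Ru`. -/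
theorem phi_bordered {A : Type*} (T : List A) (hT : T ≠ [])
    (hsof : SelfOverlapFree T)
    (Ru Rv : List (List A))
    (hRu : ∀ R ∈ Ru, ¬ T <:+: R) (hRv : ∀ R ∈ Rv, ¬ T <:+: R)
    (hne : glue T Ru ≠ glue T Rv)
    (hbord : Bordered (glue T Ru) (glue T Rv)) :
    Bordered Ru Rv := by
  obtain ⟨hp, hs⟩ := hbord
  constructor
  · exact glue_prefix hT hsof Ru Rv hRu hRv hp
  · -- suffix via reversal
    have hp' : (glue T Ru).reverse <+: (glue T Rv).reverse :=
      List.reverse_prefix.mpr hs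
    rw [glue_reverse, glue_reverse] at hp'
    have hRu' : ∀ R ∈ Ru.reverse.map List.reverse, ¬ T.reverse <:+: R := by
      intro R hR
      simp only [List.mem_map, List.mem_reverse] at hR
      obtain ⟨S, hS, rfl⟩ := hR
      exact fun hinf => hRu S hS (List.reverse_infix.mp hinf)
    have hRv' : ∀ R ∈ Rv.reverse.map List.reverse, ¬ T.reverse <:+: R := by
      intro R hR
      simp only [List.mem_map, List.mem_reverse] at hR
      obtain ⟨S, hS, rfl⟩ := hR
      exact fun hinf => hRv S hS (List.reverse_infix.mp hinf)
    have hkey := glue_prefix (by simpa using hT) (sof_reverse hsof) _ _ hRu' hRv' hp'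
    rw [List.map_reverse, List.map_reverse, List.reverse_prefix] at hkey
    obtain ⟨t, ht⟩ := hkey
    refine ⟨t.map List.reverse, ?_⟩
    have := congrArg (List.map List.reverse) ht
    simpa [List.map_map, Function.comp] using this
end

section
/- Let T ∈ A+ be a self-overlap-free word, let S = ⟨A ∣ u → v⟩ be a one-rule SRS such that both u and v are bordered with T, and let Ŝ = ⟨B ∣ φ_T(u) → φ_T(v)⟩ be the one-rule SRS over the alphabet B. Then for every k ≥ 1, M_k is embeddable in the reduction graph G_S if and only if M_k is embeddable in the reduction graph G_Ŝ. -/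
namespace Adyan
variable {A : Type*}

def body (T : List A) : List (List A) → List A
  | [] => []
  | R :: Rs => R ++ T ++ body T Rs

def abody (T : List A) : List (List A) → List A
  | [] => []
  | R :: Rs => T ++ R ++ abody T Rs

theorem glue_eq_body (T : List A) : ∀ Rs, glue T Rs = T ++ body T Rs
  | [] => by simp [glue, body]
  | R :: Rs => by simp [glue, body, glue_eq_body T Rs]

theorem abody_append_T (T : List A) : ∀ Rs, abody T Rs ++ T = T ++ body T Rs
  | [] => by simp [abody, body]
  | R :: Rs => by
      simp only [abody, body, List.append_assoc, ← abody_append_T T Rs]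

theorem glue_eq_abody (T : List A) (Rs : List (List A)) :
    glue T Rs = abody T Rs ++ T := by
  rw [abody_append_T, glue_eq_body]

theorem body_append (T : List A) : ∀ (a b : List (List A)),
    body T (a ++ b) = body T a ++ body T b
  | [], b => by simp [body]
  | R :: a, b => by simp [body, body_append T a b]

theorem abody_append (T : List A) : ∀ (a b : List (List A)),
    abody T (a ++ b) = abody T a ++ abody T b
  | [], b => by simp [abody]
  | R :: a, b => by simp [abody, abody_append T a b]

theorem glue_three (T : List A) (P M Q : List (List A)) :
    glue T (P ++ M ++ Q) = abody T P ++ glue T M ++ body T Q := by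
  rw [glue_eq_body, body_append, body_append, glue_eq_body]
  rw [show abody T P ++ (T ++ body T M) ++ body T Q
      = (abody T P ++ T) ++ body T M ++ body T Q by simp [List.append_assoc],
    abody_append_T]
  simp [List.append_assoc]

variable {T : List A}

theorem no_overlap (hsof : SelfOverlapFree T) (s a b : List A)
    (h : T ++ a = s ++ (T ++ b)) : s = [] ∨ ∃ s0, s = T ++ s0 := by
  rcases List.append_eq_append_iff.mp h with ⟨a', hs, _⟩ | ⟨c', hTc, hc⟩
  · exact Or.inr ⟨a', hs⟩
  · by_cases hs0 : s = []
    · exact Or.inl hs0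
    by_cases hc0 : c' = []
    · subst hc0; exact Or.inr ⟨[], by simpa using hTc.symm⟩
    rcases List.append_eq_append_iff.mp hc with ⟨d, hcd, _⟩ | ⟨d, hTd, _⟩
    · -- c' = T ++ d, T = s ++ c'
      exfalso
      have := congrArg List.length hTc
      rw [hcd] at this
      simp [List.length_append] at this
      have : s.length = 0 ∧ d.length = 0 := by omega
      exact hs0 (List.length_eq_zero_iff.mp this.1)
    · by_cases hd0 : d = []
      · subst hd0
        exfalso
        have h1 := congrArg List.length hTc
        have h2 := congrArg List.length hTd
        simp [List.length_append] at h1 h2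
        exact hs0 (List.length_eq_zero_iff.mp (by omega))
      · exact absurd hTd (fun hTd => hsof c' s d hc0 hs0 hd0 hTc hTd)

theorem free_cancel_left (hsof : SelfOverlapFree T)
    {L L' a b : List A} (hL : ¬ T <:+: L) (hL' : ¬ T <:+: L')
    (h : L ++ (T ++ a) = L' ++ (T ++ b)) : L = L' := by
  rcases List.append_eq_append_iff.mp h with ⟨s, hs, h2⟩ | ⟨s, hs, h2⟩
  · rcases no_overlap hsof s a b h2 with h0 | ⟨s0, rfl⟩
    · simp [hs, h0]
    · exact absurd ⟨L, s0, by simp [hs]⟩ hL'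
  · rcases no_overlap hsof s b a h2 with h0 | ⟨s0, rfl⟩
    · simp [hs, h0]
    · exact absurd ⟨L', s0, by simp [hs]⟩ hL

theorem free_cancel_right (hsof : SelfOverlapFree T)
    {x y a b : List A} (ha : ¬ T <:+: a) (hb : ¬ T <:+: b)
    (h : x ++ (T ++ a) = y ++ (T ++ b)) : a = b := by
  rcases List.append_eq_append_iff.mp h with ⟨s, hs, h2⟩ | ⟨s, hs, h2⟩
  · rcases no_overlap hsof s a b h2 with h0 | ⟨s0, rfl⟩
    · subst h0; simpa using h2
    · have : a = s0 ++ (T ++ b) := by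
        have := h2
        rw [List.append_assoc] at this
        exact List.append_cancel_left this
      exact absurd ⟨s0, b, by simp [this]⟩ ha
  · rcases no_overlap hsof s b a h2 with h0 | ⟨s0, rfl⟩
    · subst h0; simpa using h2.symm
    · have : b = s0 ++ (T ++ a) := by
        have := h2
        rw [List.append_assoc] at this
        exact List.append_cancel_left this
      exact absurd ⟨s0, a, by simp [this]⟩ hb


theorem glue_inj (hT : T ≠ []) (hsof : SelfOverlapFree T) :
    ∀ Rs Rs' : List (List A), (∀ R ∈ Rs, ¬ T <:+: R) → (∀ R ∈ Rs', ¬ T <:+: R) →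
      glue T Rs = glue T Rs' → Rs = Rs'
  | [], [], _, _, _ => rfl
  | [], R' :: Rs', _, _, h => by
      exfalso
      have := congrArg List.length h
      have hg := congrArg List.length (glue_eq_body T Rs')
      have hTpos : 0 < T.length := List.length_pos_iff.mpr hT
      simp only [glue, List.length_append] at this hg
      omega
  | R :: Rs, [], _, _, h => by
      exfalso
      have := congrArg List.length h
      have hg := congrArg List.length (glue_eq_body T Rs)
      have hTpos : 0 < T.length := List.length_pos_iff.mpr hT
      simp only [glue, List.length_append] at this hg
      omega
  | R :: Rs, R' :: Rs', hf, hf', h => by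
      simp only [glue, List.append_assoc] at h
      have h1 : R ++ glue T Rs = R' ++ glue T Rs' := List.append_cancel_left h
      rw [glue_eq_body T Rs, glue_eq_body T Rs'] at h1
      have hRR : R = R' :=
        free_cancel_left hsof (hf R (by simp)) (hf' R' (by simp)) h1
      subst hRR
      have h2 : body T Rs = body T Rs' :=
        List.append_cancel_left (List.append_cancel_left h1)
      have h3 : glue T Rs = glue T Rs' := by
        rw [glue_eq_body, glue_eq_body, h2]
      have := glue_inj hT hsof Rs Rs'
        (fun S hS => hf S (by simp [hS])) (fun S hS => hf' S (by simp [hS])) h3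
      rw [this]

theorem decomp_unique (hT : T ≠ []) (hsof : SelfOverlapFree T)
    {L L' Rt Rt' : List A} {Rs Rs' : List (List A)}
    (hL : ¬ T <:+: L) (hRs : ∀ R ∈ Rs, ¬ T <:+: R) (hRt : ¬ T <:+: Rt)
    (hL' : ¬ T <:+: L') (hRs' : ∀ R ∈ Rs', ¬ T <:+: R) (hRt' : ¬ T <:+: Rt')
    (h : L ++ glue T Rs ++ Rt = L' ++ glue T Rs' ++ Rt') :
    L = L' ∧ Rs = Rs' ∧ Rt = Rt' := by
  have h0 : L ++ (T ++ (body T Rs ++ Rt)) = L' ++ (T ++ (body T Rs' ++ Rt')) := by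
    rw [glue_eq_body, glue_eq_body] at h
    simpa [List.append_assoc] using h
  have hLL : L = L' := free_cancel_left hsof hL hL' h0
  subst hLL
  have h1 : glue T Rs ++ Rt = glue T Rs' ++ Rt' := by
    have := List.append_cancel_left h0
    rw [glue_eq_body, glue_eq_body]
    simpa [List.append_assoc] using this
  have h2 : abody T Rs ++ (T ++ Rt) = abody T Rs' ++ (T ++ Rt') := by
    rw [glue_eq_abody, glue_eq_abody] at h1
    simpa [List.append_assoc] using h1
  have hRtRt : Rt = Rt' := free_cancel_right hsof hRt hRt' h2
  subst hRtRt
  have h3 : glue T Rs = glue T Rs' := List.append_cancel_right h1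
  exact ⟨rfl, glue_inj hT hsof Rs Rs' hRs hRs' h3, rfl⟩

theorem prefix_of_append {a b : List A} (h : T <+: a ++ b)
    (hl : T.length ≤ a.length) : T <+: a := by
  obtain ⟨z, hz⟩ := h
  rcases List.append_eq_append_iff.mp hz with ⟨w, hw, _⟩ | ⟨w, hw, _⟩
  · exact ⟨w, hw.symm⟩
  · have hlen := congrArg List.length hw
    simp [List.length_append] at hlen
    have hw0 : w = [] := List.length_eq_zero_iff.mp (by omega)
    subst hw0
    simp at hw
    exact hw ▸ List.prefix_refl _

theorem suffix_of_append {a b : List A} (h : T <:+ a ++ b)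
    (hl : T.length ≤ b.length) : T <:+ b := by
  obtain ⟨z, hz⟩ := h
  rcases List.append_eq_append_iff.mp hz with ⟨w, hw, hw2⟩ | ⟨w, hw, hw2⟩
  · have hlen := congrArg List.length hw2
    simp [List.length_append] at hlen
    have hw0 : w = [] := List.length_eq_zero_iff.mp (by omega)
    subst hw0
    simp at hw2
    exact hw2 ▸ List.suffix_refl _
  · exact ⟨w, hw2.symm⟩

theorem firstOcc (hT : T ≠ []) :
    ∀ s : List A, T <:+: s → ∃ R t, s = R ++ T ++ t ∧ ¬ T <:+: R := by
  intro s
  induction s with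
  | nil =>
      intro h
      exact absurd (List.eq_nil_of_infix_nil h) hT
  | cons a s ih =>
      intro h
      by_cases hp : T <+: a :: s
      · obtain ⟨t, ht⟩ := hp
        exact ⟨[], t, by simp [← ht],
          fun hcon => hT (List.eq_nil_of_infix_nil hcon)⟩
      · obtain ⟨p, q, hpq⟩ := h
        match p, hpq with
        | [], hpq =>
            exact absurd ⟨q, by simpa using hpq⟩ hp
        | b :: p', hpq =>
            have hb : p' ++ T ++ q = s := by
              have := hpq
              simp only [List.cons_append, List.cons.injEq] at this
              exact this.2
            obtain ⟨R, t, hs, hfree⟩ := ih ⟨p', q, hb⟩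
            refine ⟨a :: R, t, by simp [hs], ?_⟩
            rintro ⟨p2, q2, h2⟩
            match p2, h2 with
            | [], h2 =>
                apply hp
                have hTpre : T <+: a :: R := ⟨q2, by simpa using h2⟩
                have hsub : (a :: R) <+: a :: s := ⟨T ++ t, by simp [hs]⟩
                exact hTpre.trans hsub
            | c :: p2', h2 =>
                have hR : p2' ++ T ++ q2 = R := by
                  have := h2
                  simp only [List.cons_append, List.cons.injEq] at this
                  exact this.2
                exact hfree ⟨p2', q2, hR⟩


theorem bord_decomp (hT : T ≠ []) (hsof : SelfOverlapFree T) :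
    ∀ n (M : List A), M.length ≤ n → T <+: M → T <:+ M →
      ∃ Rs, (∀ R ∈ Rs, ¬ T <:+: R) ∧ glue T Rs = M := by
  intro n
  induction n with
  | zero =>
      intro M hlen hpre _
      have : M = [] := List.length_eq_zero_iff.mp (Nat.le_zero.mp hlen)
      subst this
      exact absurd (List.prefix_nil.mp hpre) hT
  | succ n ih =>
      intro M hlen hpre hsuf
      obtain ⟨s, hs⟩ := hpre
      by_cases hs0 : s = []
      · subst hs0
        exact ⟨[], by simp, by simp [glue, ← hs]⟩
      · have hTpos : 0 < T.length := List.length_pos_iff.mpr hT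
        have hspos : 0 < s.length := List.length_pos_iff.mpr hs0
        have hTs : T.length ≤ s.length := by
          by_contra hlt
          push_neg at hlt
          obtain ⟨z, hz⟩ := hsuf
          rw [← hs] at hz
          rcases List.append_eq_append_iff.mp hz with ⟨w, hw1, hw2⟩ | ⟨w, hw1, hw2⟩
          · -- T = z ++ w, T = w ++ s
            by_cases hw0 : w = []
            · subst hw0
              have h2 := congrArg List.length hw2
              simp [List.length_append] at h2
              omega
            · by_cases hz0 : z = []
              · subst hz0
                have h1 := congrArg List.length hw1
                have h2 := congrArg List.length hw2
                simp [List.length_append] at h1 h2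
                omega
              · exact hsof w z s hw0 hz0 hs0 hw1 hw2
          · -- z = T ++ w, s = w ++ T
            have h2 := congrArg List.length hw2
            simp [List.length_append] at h2
            omega
        have hsufs : T <:+ s := by
          have h' := hsuf
          rw [← hs] at h'
          exact suffix_of_append h' hTs
        obtain ⟨R, t, hst, hfR⟩ := firstOcc hT s hsufs.isInfix
        have hsufTt : T <:+ T ++ t := by
          apply suffix_of_append (a := R) _ (by simp)
          rw [← List.append_assoc, ← hst]
          exact hsufs
        have hlen2 : (T ++ t).length ≤ n := by
          have h1 := congrArg List.length hs
          have h2 := congrArg List.length hst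
          simp [List.length_append] at h1 h2 ⊢
          omega
        obtain ⟨Rs, hfRs, hg⟩ := ih (T ++ t) hlen2 (List.prefix_append T t) hsufTt
        refine ⟨R :: Rs, ?_, ?_⟩
        · intro S hS
          rcases List.mem_cons.mp hS with rfl | hS
          · exact hfR
          · exact hfRs S hS
        · show T ++ R ++ glue T Rs = M
          rw [hg, ← hs, hst]
          simp [List.append_assoc]

theorem leftDecomp (hT : T ≠ []) (hsof : SelfOverlapFree T) {w : List A}
    (h : T <:+ w) :
    ∃ L Ps, ¬ T <:+: L ∧ (∀ R ∈ Ps, ¬ T <:+: R) ∧ w = L ++ glue T Ps := by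
  obtain ⟨L, t, hw, hfL⟩ := firstOcc hT w h.isInfix
  have hsufTt : T <:+ T ++ t := by
    apply suffix_of_append (a := L) _ (by simp)
    rw [← List.append_assoc, ← hw]
    exact h
  obtain ⟨Ps, hfPs, hg⟩ :=
    bord_decomp hT hsof (T ++ t).length (T ++ t) le_rfl (List.prefix_append T t) hsufTt
  exact ⟨L, Ps, hfL, hfPs, by rw [hg, hw, List.append_assoc]⟩

theorem sof_reverse (hsof : SelfOverlapFree T) : SelfOverlapFree T.reverse := by
  intro w x y hw hx hy h1 h2
  apply hsof w.reverse y.reverse x.reverse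
    (by simpa using hw) (by simpa using hy) (by simpa using hx)
  · have := congrArg List.reverse h2
    simpa using this
  · have := congrArg List.reverse h1
    simpa using this

theorem glue_snoc (T : List A) : ∀ (L : List (List A)) (R : List A),
    glue T (L ++ [R]) = glue T L ++ R ++ T
  | [], R => by simp [glue]
  | S :: L, R => by simp [glue, glue_snoc T L R]

theorem glue_reverse (T : List A) : ∀ Rs : List (List A),
    (glue T Rs).reverse = glue T.reverse (Rs.map List.reverse).reverse
  | [] => by simp [glue]
  | R :: Rs => by
      show (T ++ R ++ glue T Rs).reverse = _
      rw [List.reverse_append, List.reverse_append, glue_reverse T Rs]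
      simp only [List.map_cons, List.reverse_cons]
      rw [glue_snoc]
      simp [List.append_assoc]

theorem infix_reverse_iff {a b : List A} : a.reverse <:+: b.reverse ↔ a <:+: b :=
  List.reverse_infix

theorem rightDecomp (hT : T ≠ []) (hsof : SelfOverlapFree T) {w : List A}
    (h : T <+: w) :
    ∃ Qs Rt, (∀ R ∈ Qs, ¬ T <:+: R) ∧ ¬ T <:+: Rt ∧ w = glue T Qs ++ Rt := by
  have hrev : T.reverse <:+ w.reverse := List.reverse_suffix.mpr h
  obtain ⟨L, Ps, hfL, hfPs, hw⟩ :=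
    leftDecomp (by simpa using hT) (sof_reverse hsof) hrev
  refine ⟨(Ps.map List.reverse).reverse, L.reverse, ?_, ?_, ?_⟩
  · intro R hR
    simp only [List.mem_reverse, List.mem_map] at hR
    obtain ⟨S, hS, rfl⟩ := hR
    intro hcon
    exact hfPs S hS (by
      have := infix_reverse_iff.mpr hcon
      simpa using this)
  · intro hcon
    exact hfL (by
      have := infix_reverse_iff.mpr hcon
      simpa using this)
  · have := congrArg List.reverse hw
    simp only [List.reverse_reverse, List.reverse_append] at this
    rw [this, glue_reverse]
    simp

theorem step_decomp (hT : T ≠ []) (hsof : SelfOverlapFree T)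
    {Ruv Rvv : List (List A)} {w w' p q : List A}
    (hw : w = p ++ glue T Ruv ++ q) (hw' : w' = p ++ glue T Rvv ++ q) :
    ∃ L Ps Qs Rt, ¬ T <:+: L ∧ (∀ R ∈ Ps, ¬ T <:+: R) ∧ (∀ R ∈ Qs, ¬ T <:+: R) ∧
      ¬ T <:+: Rt ∧ w = L ++ glue T (Ps ++ Ruv ++ Qs) ++ Rt ∧
      w' = L ++ glue T (Ps ++ Rvv ++ Qs) ++ Rt := by
  obtain ⟨L, Ps, hfL, hfPs, hpT⟩ :=
    leftDecomp hT hsof (w := p ++ T) (List.suffix_append p T)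
  obtain ⟨Qs, Rt, hfQs, hfRt, hqT⟩ :=
    rightDecomp hT hsof (w := T ++ q) (List.prefix_append T q)
  have hp : p = L ++ abody T Ps := by
    apply List.append_cancel_right (bs := T)
    rw [hpT, glue_eq_abody]
    simp [List.append_assoc]
  have hq : q = body T Qs ++ Rt := by
    apply List.append_cancel_left (as := T)
    rw [hqT, glue_eq_body]
    simp [List.append_assoc]
  refine ⟨L, Ps, Qs, Rt, hfL, hfPs, hfQs, hfRt, ?_, ?_⟩
  · rw [hw, hp, hq, glue_three]
    simp [List.append_assoc]
  · rw [hw', hp, hq, glue_three]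
    simp [List.append_assoc]


variable (T) in
def lift (L : List (List A)) (h : ∀ R ∈ L, ¬ T <:+: R) :
    List {R : List A // ¬ T <:+: R} :=
  L.attach.map fun x => ⟨x.1, h x.1 x.2⟩

theorem lift_map_val (L : List (List A)) (h : ∀ R ∈ L, ¬ T <:+: R) :
    (lift T L h).map Subtype.val = L := by
  simp [lift]

end Adyan

open Adyan

/-- Adyan reduction. Let `T ∈ A⁺` be self-overlap-free, let
`u, v` be bordered with `T`, and let `Ŝ = ⟨B ∣ φ_T(u) → φ_T(v)⟩` over the
alphabet `B` of words not containing `T` as a factor (here `φ_T(u) = Ru` and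
`φ_T(v) = Rv` via the canonical decompositions `u = glue T Ru`,
`v = glue T Rv`). Then for every `k ≥ 1`, `M_k` is embeddable in `G_S` iff
`M_k` is embeddable in `G_Ŝ`. -/
theorem adyan_reduction {A : Type*} (T u v : List A)
    (hT : T ≠ []) (hsof : SelfOverlapFree T)
    (hu : Bordered T u) (hv : Bordered T v)
    (Ru Rv : List {R : List A // ¬ T <:+: R})
    (hRu : glue T (Ru.map Subtype.val) = u)
    (hRv : glue T (Rv.map Subtype.val) = v)
    (k : ℕ) (hk : 1 ≤ k) :
    MkEmbeddable u v k ↔ MkEmbeddable Ru Rv k := by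
  have hmvinj : Function.Injective
      (List.map (Subtype.val : {R : List A // ¬ T <:+: R} → List A)) :=
    List.map_injective_iff.mpr Subtype.val_injective
  have hfree : ∀ a : List {R : List A // ¬ T <:+: R},
      ∀ R ∈ a.map Subtype.val, ¬ T <:+: R := by
    intro a R hR
    obtain ⟨r, _, rfl⟩ := List.mem_map.mp hR
    exact r.2
  have happf : ∀ (a b c : List (List A)), (∀ R ∈ a, ¬ T <:+: R) →
      (∀ R ∈ b, ¬ T <:+: R) → (∀ R ∈ c, ¬ T <:+: R) →
      ∀ R ∈ a ++ b ++ c, ¬ T <:+: R := by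
    intro a b c ha hb hc R hR
    rcases List.mem_append.mp hR with h | h
    · rcases List.mem_append.mp h with h | h
      · exact ha R h
      · exact hb R h
    · exact hc R h
  have lift_injective : ∀ (L L' : List (List A)) h h',
      lift T L h = lift T L' h' → L = L' := by
    intro L L' h h' he
    have := congrArg (List.map Subtype.val) he
    rwa [lift_map_val, lift_map_val] at this
  constructor
  · rintro ⟨x, y, z, hinj, hxz, hyz, hxy, hsteps⟩
    set Ruv := Ru.map Subtype.val with hRuv
    set Rvv := Rv.map Subtype.val with hRvv
    have h1 : ∀ i, ∃ L Ps Qs Rt,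
        ¬ T <:+: L ∧ (∀ R ∈ Ps, ¬ T <:+: R) ∧ (∀ R ∈ Qs, ¬ T <:+: R) ∧
        ¬ T <:+: Rt ∧ x = L ++ glue T (Ps ++ Ruv ++ Qs) ++ Rt ∧
        z i = L ++ glue T (Ps ++ Rvv ++ Qs) ++ Rt := by
      intro i
      obtain ⟨p, q, hx', hz'⟩ := (hsteps i).1
      exact step_decomp hT hsof (by rw [hx', hRu]) (by rw [hz', hRv])
    choose L Ps Qs Rt hfL hfPs hfQs hfRt hxdec hzdec using h1
    have h2 : ∀ i, ∃ L Ps Qs Rt,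
        ¬ T <:+: L ∧ (∀ R ∈ Ps, ¬ T <:+: R) ∧ (∀ R ∈ Qs, ¬ T <:+: R) ∧
        ¬ T <:+: Rt ∧ z i = L ++ glue T (Ps ++ Ruv ++ Qs) ++ Rt ∧
        y = L ++ glue T (Ps ++ Rvv ++ Qs) ++ Rt := by
      intro i
      obtain ⟨p, q, hz', hy'⟩ := (hsteps i).2
      exact step_decomp hT hsof (by rw [hz', hRu]) (by rw [hy', hRv])
    choose L' Ps' Qs' Rt' hfL' hfPs' hfQs' hfRt' hzdec' hydec using h2
    have hfRuv : ∀ R ∈ Ruv, ¬ T <:+: R := hfree Ru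
    have hfRvv : ∀ R ∈ Rvv, ¬ T <:+: R := hfree Rv
    have hfX : ∀ i, ∀ R ∈ Ps i ++ Ruv ++ Qs i, ¬ T <:+: R :=
      fun i => happf _ _ _ (hfPs i) hfRuv (hfQs i)
    have hfZ : ∀ i, ∀ R ∈ Ps i ++ Rvv ++ Qs i, ¬ T <:+: R :=
      fun i => happf _ _ _ (hfPs i) hfRvv (hfQs i)
    have hfZ' : ∀ i, ∀ R ∈ Ps' i ++ Ruv ++ Qs' i, ¬ T <:+: R :=
      fun i => happf _ _ _ (hfPs' i) hfRuv (hfQs' i)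
    have hfY : ∀ i, ∀ R ∈ Ps' i ++ Rvv ++ Qs' i, ¬ T <:+: R :=
      fun i => happf _ _ _ (hfPs' i) hfRvv (hfQs' i)
    obtain ⟨i0⟩ : Nonempty (Fin k) := ⟨⟨0, hk⟩⟩
    have ux : ∀ i, L i = L i0 ∧ (Ps i ++ Ruv ++ Qs i) = (Ps i0 ++ Ruv ++ Qs i0) ∧
        Rt i = Rt i0 := fun i =>
      decomp_unique hT hsof (hfL i) (hfX i) (hfRt i) (hfL i0) (hfX i0) (hfRt i0)
        ((hxdec i).symm.trans (hxdec i0))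
    have uz : ∀ i, L i = L' i ∧ (Ps i ++ Rvv ++ Qs i) = (Ps' i ++ Ruv ++ Qs' i) ∧
        Rt i = Rt' i := fun i =>
      decomp_unique hT hsof (hfL i) (hfZ i) (hfRt i) (hfL' i) (hfZ' i) (hfRt' i)
        ((hzdec i).symm.trans (hzdec' i))
    have uy : ∀ i, L' i = L' i0 ∧
        (Ps' i ++ Rvv ++ Qs' i) = (Ps' i0 ++ Rvv ++ Qs' i0) ∧
        Rt' i = Rt' i0 := fun i =>
      decomp_unique hT hsof (hfL' i) (hfY i) (hfRt' i) (hfL' i0) (hfY i0) (hfRt' i0)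
        ((hydec i).symm.trans (hydec i0))
    refine ⟨lift T (Ps i0 ++ Ruv ++ Qs i0) (hfX i0),
      lift T (Ps' i0 ++ Rvv ++ Qs' i0) (hfY i0),
      fun i => lift T (Ps i ++ Rvv ++ Qs i) (hfZ i), ?_, ?_, ?_, ?_, ?_⟩
    · intro i j he
      apply hinj
      have hZ := lift_injective _ _ _ _ he
      rw [hzdec i, hzdec j, hZ, (ux i).1, (ux j).1, (ux i).2.2, (ux j).2.2]
    · intro i he
      apply hxz i
      have hZ := lift_injective _ _ _ _ he
      rw [hxdec i, hzdec i, (ux i).2.1, hZ]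
    · intro i he
      apply hyz i
      have hZ := lift_injective _ _ _ _ he
      rw [hydec i, hzdec i, ← hZ, (uy i).2.1, (uz i).1, (uz i).2.2]
    · intro he
      apply hxy
      have hZ := lift_injective _ _ _ _ he
      rw [hxdec i0, hydec i0, hZ, (uz i0).1, (uz i0).2.2]
    · intro i
      constructor
      · refine ⟨lift T (Ps i) (hfPs i), lift T (Qs i) (hfQs i), ?_, ?_⟩
        · apply hmvinj
          rw [lift_map_val]
          simp only [List.map_append, lift_map_val]
          exact ((ux i).2.1).symm
        · apply hmvinj
          rw [lift_map_val]
          simp only [List.map_append, lift_map_val]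
          rfl
      · refine ⟨lift T (Ps' i) (hfPs' i), lift T (Qs' i) (hfQs' i), ?_, ?_⟩
        · apply hmvinj
          rw [lift_map_val]
          simp only [List.map_append, lift_map_val]
          exact (uz i).2.1
        · apply hmvinj
          rw [lift_map_val]
          simp only [List.map_append, lift_map_val]
          exact ((uy i).2.1).symm
  · rintro ⟨xh, yh, zh, hinj, hxz, hyz, hxy, hsteps⟩
    have gneq : ∀ a b : List {R : List A // ¬ T <:+: R}, a ≠ b →
        glue T (a.map Subtype.val) ≠ glue T (b.map Subtype.val) := by
      intro a b hne he
      exact hne (hmvinj (glue_inj hT hsof _ _ (hfree a) (hfree b) he))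
    have gstep : ∀ a b : List {R : List A // ¬ T <:+: R}, Step Ru Rv a b →
        Step u v (glue T (a.map Subtype.val)) (glue T (b.map Subtype.val)) := by
      rintro a b ⟨p, q, rfl, rfl⟩
      refine ⟨abody T (p.map Subtype.val), body T (q.map Subtype.val), ?_, ?_⟩
      · rw [List.map_append, List.map_append, glue_three, hRu]
      · rw [List.map_append, List.map_append, glue_three, hRv]
    refine ⟨glue T (xh.map Subtype.val), glue T (yh.map Subtype.val),
      fun i => glue T ((zh i).map Subtype.val), ?_, ?_, ?_, ?_, ?_⟩
    · intro i j he
      exact hinj (hmvinj (glue_inj hT hsof _ _ (hfree _) (hfree _) he))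
    · exact fun i => gneq _ _ (hxz i)
    · exact fun i => gneq _ _ (hyz i)
    · exact gneq _ _ hxy
    · exact fun i => ⟨gstep _ _ (hsteps i).1, gstep _ _ (hsteps i).2⟩
end
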